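/- arXiv:1907.09784 — 7 statements merged into one kernel-verified Lean document; each statement's English description precedes it below -/
import Mathlib

section
/- For every r ∈ ℕ one has f̲ ≤ τℓ_r(#λ) ≤ τu_r(#λ) ≤ f̄. That is, the global minimum of f on Ω is a lower bound for the sequence of scalars τℓ_r(#λ), and the global maximum of f on Ω is an upper bound for the scalars τu_r(#λ). -/
open MeasureTheory Filter

noncomputable section

/-- The support of a Borel measure: points all of whose open neighborhoods
have positive measure. -/
def measSupp {α : Type*} [TopologicalSpace α] [MeasurableSpace α]
    (μ : Measure α) : Set α :=
  {x | ∀ U : Set α, IsOpen U → x ∈ U → μ U ≠ 0}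

/-- Moment matrix `H_r(μ)`. -/
def momentMatrix (μ : Measure ℝ) (r : ℕ) : Matrix (Fin (r + 1)) (Fin (r + 1)) ℝ :=
  fun i j => ∫ x, x ^ ((i : ℕ) + (j : ℕ)) ∂μ

/-- Localizing matrix `H_r(x; μ)`. -/
def locMatrix (μ : Measure ℝ) (r : ℕ) : Matrix (Fin (r + 1)) (Fin (r + 1)) ℝ :=
  fun i j => ∫ x, x ^ ((i : ℕ) + (j : ℕ) + 1) ∂μ

/-- `τℓ_r(μ)`. -/
def tauL (μ : Measure ℝ) (r : ℕ) : ℝ :=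
  sSup {a : ℝ | (locMatrix μ r - a • momentMatrix μ r).PosSemidef}

/-- `τu_r(μ)`. -/
def tauU (μ : Measure ℝ) (r : ℕ) : ℝ :=
  sInf {a : ℝ | (a • momentMatrix μ r - locMatrix μ r).PosSemidef}

/-- Generalized eigenvalues of the pair (A, C). -/
def genEigs {m : ℕ} (A C : Matrix (Fin m) (Fin m) ℝ) : Set ℝ :=
  {t : ℝ | ∃ v : Fin m → ℝ, v ≠ 0 ∧ A.mulVec v = t • C.mulVec v}

def genEigMin {m : ℕ} (A C : Matrix (Fin m) (Fin m) ℝ) : ℝ := sInf (genEigs A C)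

def genEigMax {m : ℕ} (A C : Matrix (Fin m) (Fin m) ℝ) : ℝ := sSup (genEigs A C)

/-- Eigenvalues of a matrix. -/
def matEigs {m : ℕ} (M : Matrix (Fin m) (Fin m) ℝ) : Set ℝ :=
  {t : ℝ | ∃ v : Fin m → ℝ, v ≠ 0 ∧ M.mulVec v = t • v}

def matMinEig {m : ℕ} (M : Matrix (Fin m) (Fin m) ℝ) : ℝ := sInf (matEigs M)

def matMaxEig {m : ℕ} (M : Matrix (Fin m) (Fin m) ℝ) : ℝ := sSup (matEigs M)

/-- Truncated Jacobi matrix `J_r`. -/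
def jacobiMatrix (a b : ℕ → ℝ) (r : ℕ) : Matrix (Fin (r + 1)) (Fin (r + 1)) ℝ :=
  fun i j =>
    if (i : ℕ) = (j : ℕ) then b (i : ℕ)
    else if (i : ℕ) + 1 = (j : ℕ) then a (i : ℕ)
    else if (j : ℕ) + 1 = (i : ℕ) then a (j : ℕ)
    else 0

end


noncomputable section

namespace TauAux

variable {μ : Measure ℝ} [IsFiniteMeasure μ] {lo hi : ℝ}

lemma integrable_pow (h : ∀ᵐ x ∂μ, x ∈ Set.Icc lo hi) (k : ℕ) :
    Integrable (fun x : ℝ => x ^ k) μ := by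
  refine Integrable.mono' (integrable_const ((max |lo| |hi|) ^ k))
    ((measurable_id.pow_const k).aestronglyMeasurable) ?_
  filter_upwards [h] with x hx
  have hxb : |x| ≤ max |lo| |hi| := abs_le_max_abs_abs hx.1 hx.2
  calc ‖x ^ k‖ = |x| ^ k := by rw [Real.norm_eq_abs, abs_pow]
    _ ≤ (max |lo| |hi|) ^ k := pow_le_pow_left₀ (abs_nonneg x) hxb k

lemma quadform_eq (h : ∀ᵐ x ∂μ, x ∈ Set.Icc lo hi) (r : ℕ) (a : ℝ)
    (v : Fin (r + 1) → ℝ) :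
    dotProduct v ((locMatrix μ r - a • momentMatrix μ r).mulVec v)
      = ∫ x, (x - a) * (∑ i : Fin (r + 1), v i * x ^ (i : ℕ)) ^ 2 ∂μ := by
  have hpow := integrable_pow h
  have hint : ∀ k : ℕ, Integrable (fun x : ℝ => x ^ (k + 1) - a * x ^ k) μ :=
    fun k => (hpow (k + 1)).sub ((hpow k).const_mul a)
  have key : ∀ x : ℝ, (x - a) * (∑ i : Fin (r + 1), v i * x ^ (i : ℕ)) ^ 2
      = ∑ i : Fin (r + 1), ∑ j : Fin (r + 1),
          v i * v j * (x ^ ((i : ℕ) + (j : ℕ) + 1) - a * x ^ ((i : ℕ) + (j : ℕ))) := by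
    intro x
    rw [sq, Finset.sum_mul_sum, Finset.mul_sum]
    refine Finset.sum_congr rfl fun i _ => ?_
    rw [Finset.mul_sum]
    refine Finset.sum_congr rfl fun j _ => ?_
    simp only [pow_add, pow_one]
    ring
  have hR : ∫ x, (x - a) * (∑ i : Fin (r + 1), v i * x ^ (i : ℕ)) ^ 2 ∂μ
      = ∑ i : Fin (r + 1), ∑ j : Fin (r + 1), v i * v j *
          ((∫ x, x ^ ((i : ℕ) + (j : ℕ) + 1) ∂μ) - a * ∫ x, x ^ ((i : ℕ) + (j : ℕ)) ∂μ) := by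
    simp_rw [key]
    rw [integral_finset_sum _ (fun i _ =>
      integrable_finset_sum _ (fun j _ => (hint _).const_mul _))]
    refine Finset.sum_congr rfl fun i _ => ?_
    rw [integral_finset_sum _ (fun j _ => (hint _).const_mul _)]
    refine Finset.sum_congr rfl fun j _ => ?_
    rw [integral_const_mul, integral_sub (hpow _) ((hpow _).const_mul a),
      integral_const_mul]
  rw [hR]
  simp only [dotProduct, Matrix.mulVec, Matrix.sub_apply, Matrix.smul_apply, locMatrix,
    momentMatrix, smul_eq_mul, Finset.mul_sum]
  refine Finset.sum_congr rfl fun i _ => Finset.sum_congr rfl fun j _ => by ring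

lemma herm_loc_mom (μ : Measure ℝ) (r : ℕ) (a : ℝ) :
    (locMatrix μ r - a • momentMatrix μ r).IsHermitian := by
  ext i j
  simp only [Matrix.conjTranspose_apply, Matrix.sub_apply, Matrix.smul_apply, locMatrix,
    momentMatrix, smul_eq_mul, star_trivial]
  rw [Nat.add_comm (j : ℕ) (i : ℕ)]

lemma psd_lower (h : ∀ᵐ x ∂μ, x ∈ Set.Icc lo hi) (r : ℕ) :
    (locMatrix μ r - lo • momentMatrix μ r).PosSemidef := by
  refine Matrix.PosSemidef.of_dotProduct_mulVec_nonneg (herm_loc_mom μ r lo) fun v => ?_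
  rw [show star v = v from funext fun i => star_trivial _, quadform_eq h r lo v]
  refine integral_nonneg_of_ae ?_
  filter_upwards [h] with x hx
  exact mul_nonneg (sub_nonneg.2 hx.1) (sq_nonneg _)

lemma psd_upper (h : ∀ᵐ x ∂μ, x ∈ Set.Icc lo hi) (r : ℕ) :
    (hi • momentMatrix μ r - locMatrix μ r).PosSemidef := by
  have hM : hi • momentMatrix μ r - locMatrix μ r
      = -(locMatrix μ r - hi • momentMatrix μ r) := (neg_sub _ _).symm
  rw [hM]
  refine Matrix.PosSemidef.of_dotProduct_mulVec_nonneg (herm_loc_mom μ r hi).neg fun v => ?_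
  rw [Matrix.neg_mulVec, dotProduct_neg,
    show star v = v from funext fun i => star_trivial _, quadform_eq h r hi v]
  refine neg_nonneg.mpr (integral_nonpos_of_ae ?_)
  filter_upwards [h] with x hx
  exact mul_nonpos_of_nonpos_of_nonneg (sub_nonpos.2 hx.2) (sq_nonneg _)

lemma quad_single {k : ℕ} (M : Matrix (Fin (k + 1)) (Fin (k + 1)) ℝ) :
    dotProduct (star (Pi.single (0 : Fin (k + 1)) (1 : ℝ)))
      (M.mulVec (Pi.single 0 1)) = M 0 0 := by
  simp [dotProduct, Matrix.mulVec, Pi.single_apply]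

end TauAux

end

/-- For every r, f̲ ≤ τℓ_r(#λ) ≤ τu_r(#λ) ≤ f̄. -/
theorem tau_bounds
    (n : ℕ) (hn : 1 ≤ n) (Ω : Set (Fin n → ℝ))
    (hΩc : IsCompact Ω) (hΩne : Ω.Nonempty)
    (f : (Fin n → ℝ) → ℝ) (hf : Continuous f)
    (lam : MeasureTheory.Measure (Fin n → ℝ)) [MeasureTheory.IsFiniteMeasure lam]
    (hlam : lam ≠ 0) (hsupp : measSupp lam = Ω)
    (r : ℕ) :
    sInf (f '' Ω) ≤ tauL (lam.map f) r ∧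
      tauL (lam.map f) r ≤ tauU (lam.map f) r ∧
        tauU (lam.map f) r ≤ sSup (f '' Ω) := by
  classical
  have hfm : Measurable f := hf.measurable
  haveI : MeasureTheory.IsFiniteMeasure (lam.map f) := Measure.isFiniteMeasure_map lam f
  set μ : Measure ℝ := lam.map f with hμ
  set lo := sInf (f '' Ω) with hlo
  set hi := sSup (f '' Ω) with hhi
  have himg : IsCompact (f '' Ω) := hΩc.image hf
  have hmem : ∀ x ∈ Ω, f x ∈ Set.Icc lo hi := fun x hx =>
    ⟨csInf_le himg.bddBelow ⟨x, hx, rfl⟩, le_csSup himg.bddAbove ⟨x, hx, rfl⟩⟩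
  have hnull : lam Ωᶜ = 0 := by
    refine measure_null_of_locally_null _ fun x hx => ?_
    rw [Set.mem_compl_iff, ← hsupp] at hx
    simp only [measSupp, Set.mem_setOf_eq] at hx
    push_neg at hx
    obtain ⟨U, hUo, hxU, hU0⟩ := hx
    exact ⟨U, mem_nhdsWithin_of_mem_nhds (hUo.mem_nhds hxU), hU0⟩
  have hae : ∀ᵐ x ∂μ, x ∈ Set.Icc lo hi := by
    rw [ae_iff, show {x : ℝ | ¬ x ∈ Set.Icc lo hi} = (Set.Icc lo hi)ᶜ from rfl,
      hμ, Measure.map_apply hfm measurableSet_Icc.compl]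
    exact measure_mono_null (fun x hx hΩx => hx (hmem x hΩx)) hnull
  have hμuniv : μ Set.univ = lam Set.univ := by
    rw [hμ, Measure.map_apply hfm MeasurableSet.univ, Set.preimage_univ]
  set m := (μ Set.univ).toReal with hm
  have hm0 : 0 < m := by
    refine ENNReal.toReal_pos ?_ (measure_ne_top _ _)
    rw [hμuniv]
    exact Measure.measure_univ_ne_zero.mpr hlam
  have hmom00 : momentMatrix μ r 0 0 = m := by
    simp [momentMatrix, hm, MeasureTheory.integral_const, smul_eq_mul, Measure.real]
  have hloc00 : locMatrix μ r 0 0 = ∫ x, x ∂μ := by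
    simp [locMatrix]
  set I1 := ∫ x, x ∂μ with hI1
  set B := I1 / m with hB
  have hLle : ∀ a ∈ {a : ℝ | (locMatrix μ r - a • momentMatrix μ r).PosSemidef}, a ≤ B := by
    intro a ha
    have h0 := ha.dotProduct_mulVec_nonneg (Pi.single 0 1)
    rw [TauAux.quad_single] at h0
    simp only [Matrix.sub_apply, Matrix.smul_apply, smul_eq_mul, hmom00, hloc00, ← hI1] at h0
    rw [hB, le_div_iff₀ hm0]
    linarith
  have hUge : ∀ b ∈ {a : ℝ | (a • momentMatrix μ r - locMatrix μ r).PosSemidef}, B ≤ b := by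
    intro b hb
    have h0 := hb.dotProduct_mulVec_nonneg (Pi.single 0 1)
    rw [TauAux.quad_single] at h0
    simp only [Matrix.sub_apply, Matrix.smul_apply, smul_eq_mul, hmom00, hloc00, ← hI1] at h0
    rw [hB, div_le_iff₀ hm0]
    linarith
  have hloL : (locMatrix μ r - lo • momentMatrix μ r).PosSemidef := TauAux.psd_lower hae r
  have hhiU : (hi • momentMatrix μ r - locMatrix μ r).PosSemidef := TauAux.psd_upper hae r
  refine ⟨le_csSup ⟨B, hLle⟩ hloL, ?_, csInf_le ⟨B, hUge⟩ hhiU⟩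
  exact csSup_le ⟨lo, hloL⟩ fun a ha =>
    le_csInf ⟨hi, hhiU⟩ fun b hb => (hLle a ha).trans (hUge b hb)
end

section
/- The sequence (τℓ_r(#λ))_{r∈ℕ} converges to the global minimum of f on Ω: lim_{r→∞} τℓ_r(#λ) = f̲. -/
open MeasureTheory Filter

-- aux lemmas
section AuxLems
open Matrix
variable {n : ℕ} {Ω : Set (Fin n → ℝ)} {f : (Fin n → ℝ) → ℝ}
  {lam : Measure (Fin n → ℝ)} [IsFiniteMeasure lam]

lemma lam_compl_zero (hΩcl : IsClosed Ω) (hsupp : measSupp lam = Ω) : lam Ωᶜ = 0 := by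
  set S : Set (Set (Fin n → ℝ)) := {U | IsOpen U ∧ lam U = 0} with hS
  obtain ⟨T, hTc, hTS, hTU⟩ := TopologicalSpace.isOpen_sUnion_countable S (fun s hs => hs.1)
  have hsub : Ωᶜ ⊆ ⋃₀ S := by
    intro x hx
    have hx' : x ∉ measSupp lam := by rw [hsupp]; exact hx
    simp only [measSupp, Set.mem_setOf_eq] at hx'
    push_neg at hx'
    obtain ⟨U, hU, hxU, hU0⟩ := hx'
    exact ⟨U, ⟨hU, hU0⟩, hxU⟩
  have h0 : lam (⋃₀ T) = 0 := (measure_sUnion_null_iff hTc).2 (fun s hs => (hTS hs).2)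
  exact measure_mono_null (hTU ▸ hsub) h0

lemma integrable_aux (hΩc : IsCompact Ω) (hf : Continuous f) (hae : ∀ᵐ y ∂lam, y ∈ Ω)
    {g : ℝ → ℝ} (hg : Continuous g) : Integrable (fun y => g (f y)) lam := by
  obtain ⟨R, hR⟩ := hΩc.exists_bound_of_continuousOn (hg.comp hf).continuousOn
  exact Integrable.mono' (integrable_const R)
    ((hg.comp hf).measurable.aestronglyMeasurable)
    (hae.mono fun y hy => hR y hy)

lemma herm_aux (μ : Measure ℝ) (r : ℕ) (a : ℝ) :
    (locMatrix μ r - a • momentMatrix μ r).IsHermitian := by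
  refine Matrix.ext fun i j => ?_
  simp only [Matrix.conjTranspose_apply, Matrix.sub_apply, Matrix.smul_apply, locMatrix,
    momentMatrix, star_trivial, smul_eq_mul, add_comm (j : ℕ) (i : ℕ)]

lemma quad_form (hΩc : IsCompact Ω) (hf : Continuous f) (hae : ∀ᵐ y ∂lam, y ∈ Ω)
    (r : ℕ) (a : ℝ) (v : Fin (r + 1) → ℝ) :
    dotProduct v ((locMatrix (lam.map f) r - a • momentMatrix (lam.map f) r).mulVec v)
      = ∫ y, (f y - a) * (∑ i : Fin (r + 1), v i * f y ^ (i : ℕ)) ^ 2 ∂lam := by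
  have hint : ∀ g : ℝ → ℝ, Continuous g → Integrable (fun y => g (f y)) lam :=
    fun g hg => integrable_aux hΩc hf hae hg
  have hpow : ∀ m : ℕ, Integrable (fun y => f y ^ m) lam := fun m => hint _ (continuous_pow m)
  have hmap : ∀ m : ℕ, (∫ x, x ^ m ∂(lam.map f)) = ∫ y, f y ^ m ∂lam := fun m =>
    integral_map hf.aemeasurable (continuous_pow m).aestronglyMeasurable
  have hentry : ∀ i j : Fin (r + 1),
      (locMatrix (lam.map f) r - a • momentMatrix (lam.map f) r) i j
        = ∫ y, (f y - a) * f y ^ ((i : ℕ) + (j : ℕ)) ∂lam := by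
    intro i j
    have hfe : (fun y => (f y - a) * f y ^ ((i : ℕ) + (j : ℕ)))
        = fun y => f y ^ ((i : ℕ) + (j : ℕ) + 1) - a * f y ^ ((i : ℕ) + (j : ℕ)) := by
      funext y; ring
    simp only [Matrix.sub_apply, Matrix.smul_apply, locMatrix, momentMatrix, smul_eq_mul]
    rw [hmap, hmap, hfe, integral_sub (hpow _) ((hpow _).const_mul a), integral_const_mul]
  have hsummand : ∀ i j : Fin (r + 1),
      Integrable (fun y => v i * v j * ((f y - a) * f y ^ ((i : ℕ) + (j : ℕ)))) lam := by
    intro i j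
    exact (hint (fun x => (x - a) * x ^ ((i : ℕ) + (j : ℕ)))
      ((continuous_id.sub continuous_const).mul (continuous_pow _))).const_mul _
  calc dotProduct v ((locMatrix (lam.map f) r - a • momentMatrix (lam.map f) r).mulVec v)
      = ∑ i, ∑ j, ∫ y, v i * v j * ((f y - a) * f y ^ ((i : ℕ) + (j : ℕ))) ∂lam := by
        rw [dotProduct]
        refine Finset.sum_congr rfl fun i _ => ?_
        rw [Matrix.mulVec, dotProduct, Finset.mul_sum]
        refine Finset.sum_congr rfl fun j _ => ?_
        rw [hentry i j,
          show v i * ((∫ y, (f y - a) * f y ^ ((i : ℕ) + (j : ℕ)) ∂lam) * v j)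
            = (v i * v j) * ∫ y, (f y - a) * f y ^ ((i : ℕ) + (j : ℕ)) ∂lam from by ring,
          ← integral_const_mul]
    _ = ∫ y, ∑ i : Fin (r + 1), ∑ j : Fin (r + 1),
          v i * v j * ((f y - a) * f y ^ ((i : ℕ) + (j : ℕ))) ∂lam := by
        rw [integral_finset_sum _ (fun i _ => integrable_finset_sum _ fun j _ => hsummand i j)]
        exact Finset.sum_congr rfl fun i _ =>
          (integral_finset_sum _ fun j _ => hsummand i j).symm
    _ = ∫ y, (f y - a) * (∑ i : Fin (r + 1), v i * f y ^ (i : ℕ)) ^ 2 ∂lam := by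
        refine integral_congr_ae (Eventually.of_forall fun y => ?_)
        dsimp only
        have hsq : (∑ i : Fin (r + 1), v i * f y ^ (i : ℕ)) ^ 2
            = ∑ i : Fin (r + 1), ∑ j : Fin (r + 1),
                (v i * f y ^ (i : ℕ)) * (v j * f y ^ (j : ℕ)) := by
          rw [sq, Finset.sum_mul_sum]
        rw [hsq, Finset.mul_sum]
        refine Finset.sum_congr rfl fun i _ => ?_
        rw [Finset.mul_sum]
        refine Finset.sum_congr rfl fun j _ => ?_
        rw [pow_add]; ring

end AuxLems


set_option maxHeartbeats 1000000 in
/-- τℓ_r(#λ) → f̲ as r → ∞. -/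
theorem tauL_tendsto_min
    (n : ℕ) (hn : 1 ≤ n) (Ω : Set (Fin n → ℝ))
    (hΩc : IsCompact Ω) (hΩne : Ω.Nonempty)
    (f : (Fin n → ℝ) → ℝ) (hf : Continuous f)
    (lam : MeasureTheory.Measure (Fin n → ℝ)) [MeasureTheory.IsFiniteMeasure lam]
    (hlam : lam ≠ 0) (hsupp : measSupp lam = Ω) :
    Filter.Tendsto (fun r : ℕ => tauL (lam.map f) r) Filter.atTop (nhds (sInf (f '' Ω))) := by
  classical
  have h0 : lam Ωᶜ = 0 := lam_compl_zero hΩc.isClosed hsupp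
  have hae : ∀ᵐ y ∂lam, y ∈ Ω := by rw [ae_iff]; exact h0
  have hint : ∀ g : ℝ → ℝ, Continuous g → Integrable (fun y => g (f y)) lam :=
    fun g hg => integrable_aux hΩc hf hae hg
  have hstar : ∀ {k : ℕ} (v : Fin k → ℝ), star v = v :=
    fun v => funext fun i => by rw [Pi.star_apply, star_trivial]
  set c := sInf (f '' Ω) with hc
  set C := sSup (f '' Ω) with hC
  have hbddA : BddAbove (f '' Ω) := (hΩc.image hf).bddAbove
  have hbddB : BddBelow (f '' Ω) := (hΩc.image hf).bddBelow
  have hcle : ∀ y ∈ Ω, c ≤ f y := fun y hy => csInf_le hbddB ⟨y, hy, rfl⟩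
  have hCge : ∀ y ∈ Ω, f y ≤ C := fun y hy => le_csSup hbddA ⟨y, hy, rfl⟩
  obtain ⟨y₀, hy₀Ω, hy₀⟩ := hΩc.exists_sInf_image_eq hΩne hf.continuousOn
  have hy₀c : c = f y₀ := by rw [hc]; exact hy₀
  have hcC : c ≤ C := hy₀c ▸ hCge y₀ hy₀Ω
  have hm : 0 < (lam Set.univ).toReal :=
    ENNReal.toReal_pos (MeasureTheory.Measure.measure_univ_ne_zero.2 hlam) (measure_ne_top _ _)
  -- c belongs to every S_r
  have hc_mem : ∀ r : ℕ,
      (locMatrix (lam.map f) r - c • momentMatrix (lam.map f) r).PosSemidef := by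
    intro r
    refine Matrix.PosSemidef.of_dotProduct_mulVec_nonneg (herm_aux _ r c) fun v => ?_
    rw [hstar v, quad_form hΩc hf hae r c v]
    refine integral_nonneg_of_ae (hae.mono fun y hy => ?_)
    exact mul_nonneg (by linarith [hcle y hy]) (sq_nonneg _)
  -- every element of S_r is at most C
  have hBdd : ∀ (r : ℕ) (a : ℝ),
      (locMatrix (lam.map f) r - a • momentMatrix (lam.map f) r).PosSemidef → a ≤ C := by
    intro r a ha
    by_contra hca
    push_neg at hca
    set v : Fin (r + 1) → ℝ := fun i => if i = 0 then 1 else 0 with hv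
    have h2 := ha.dotProduct_mulVec_nonneg v
    rw [hstar v, quad_form hΩc hf hae r a v] at h2
    have hpv : ∀ t : ℝ, (∑ i : Fin (r + 1), v i * t ^ (i : ℕ)) = 1 := by
      intro t
      simp [hv, ite_mul]
    have hrw : (fun y => (f y - a) * (∑ i : Fin (r + 1), v i * f y ^ (i : ℕ)) ^ 2)
        = fun y => f y - a := by funext y; rw [hpv]; ring
    rw [hrw] at h2
    have hle : (∫ y, f y - a ∂lam) ≤ ∫ _y, C - a ∂lam := by
      refine integral_mono_ae (hint (fun x => x - a) (continuous_id.sub continuous_const))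
        (integrable_const _) (hae.mono fun y hy => ?_)
      have := hCge y hy
      simp only []
      linarith
    have hconst : (∫ _y, C - a ∂lam) = (lam Set.univ).toReal * (C - a) := by
      rw [integral_const, smul_eq_mul, measureReal_def]
    nlinarith [h2, hle, hconst, hm]
  have hSne : ∀ r : ℕ, Set.Nonempty
      {a : ℝ | (locMatrix (lam.map f) r - a • momentMatrix (lam.map f) r).PosSemidef} :=
    fun r => ⟨c, hc_mem r⟩
  have hSbdd : ∀ r : ℕ, BddAbove
      {a : ℝ | (locMatrix (lam.map f) r - a • momentMatrix (lam.map f) r).PosSemidef} :=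
    fun r => ⟨C, fun a ha => hBdd r a ha⟩
  have hlow : ∀ r : ℕ, c ≤ tauL (lam.map f) r := fun r => le_csSup (hSbdd r) (hc_mem r)
  refine tendsto_order.2
    ⟨fun b hb => Eventually.of_forall fun r => lt_of_lt_of_le hb (hlow r), fun b hb => ?_⟩
  -- upper bound part
  set η := min ((b - c) / 2) (1 / 2 : ℝ) with hηdef
  have hη0 : 0 < η := lt_min (by linarith) (by norm_num)
  have hη1 : η ≤ 1 / 2 := min_le_right _ _
  have hηb : c + η < b := by
    have h := min_le_left ((b - c) / 2) (1 / 2 : ℝ)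
    linarith [hηdef, h]
  set B := C + 1 with hBdef
  set β₁ := B - c - η with hβ₁def
  set β₂ := B - c - η / 4 with hβ₂def
  have hβ₁ : 0 < β₁ := by rw [hβ₁def, hBdef]; linarith
  have hβ₁2 : β₁ < β₂ := by rw [hβ₁def, hβ₂def]; linarith
  have hβ₂0 : 0 < β₂ := lt_trans hβ₁ hβ₁2
  set G := f ⁻¹' Set.Iio (c + η / 4) with hGdef
  have hGopen : IsOpen G := isOpen_Iio.preimage hf
  have hy₀G : y₀ ∈ G := by
    show f y₀ ∈ Set.Iio (c + η / 4)
    rw [Set.mem_Iio, ← hy₀c]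
    linarith
  have hGne : lam G ≠ 0 := by
    have hy₀s : y₀ ∈ measSupp lam := by rw [hsupp]; exact hy₀Ω
    exact hy₀s G hGopen hy₀G
  have hmG : 0 < (lam G).toReal := ENNReal.toReal_pos hGne (measure_ne_top _ _)
  set ρ := β₂ ^ 2 / β₁ ^ 2 with hρdef
  have hρ : 1 < ρ := by
    rw [hρdef, lt_div_iff₀ (by positivity)]
    nlinarith
  obtain ⟨k, hk⟩ := ((tendsto_pow_atTop_atTop_of_one_lt hρ).eventually_gt_atTop
    ((C - c) * (lam Set.univ).toReal / (3 * η / 4 * (lam G).toReal))).exists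
  have hkey : (C - c) * (lam Set.univ).toReal * (β₁ ^ 2) ^ k
      < 3 * η / 4 * (lam G).toReal * (β₂ ^ 2) ^ k := by
    have h1 : (C - c) * (lam Set.univ).toReal < 3 * η / 4 * (lam G).toReal * ρ ^ k := by
      rw [div_lt_iff₀ (by positivity)] at hk
      linarith
    have h2 : ρ ^ k * (β₁ ^ 2) ^ k = (β₂ ^ 2) ^ k := by
      rw [← mul_pow, hρdef, div_mul_cancel₀]
      positivity
    calc (C - c) * (lam Set.univ).toReal * (β₁ ^ 2) ^ k
        < 3 * η / 4 * (lam G).toReal * ρ ^ k * (β₁ ^ 2) ^ k :=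
          mul_lt_mul_of_pos_right h1 (by positivity)
      _ = 3 * η / 4 * (lam G).toReal * (β₂ ^ 2) ^ k := by rw [mul_assoc, h2]
  refine eventually_atTop.2 ⟨k, fun r hr => ?_⟩
  have hcη : tauL (lam.map f) r ≤ c + η := by
    refine csSup_le (hSne r) ?_
    intro a ha
    by_contra hab
    push_neg at hab
    set q : Polynomial ℝ := (Polynomial.X - Polynomial.C B) ^ k with hq
    have hdeg : q.natDegree < r + 1 := by
      rw [hq, Polynomial.natDegree_pow, Polynomial.natDegree_X_sub_C]
      omega
    set v : Fin (r + 1) → ℝ := fun i => q.coeff i with hv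
    have hpv : ∀ t : ℝ, (∑ i : Fin (r + 1), v i * t ^ (i : ℕ)) = (t - B) ^ k := by
      intro t
      have he := Polynomial.eval_eq_sum_range' hdeg t
      have hse : (∑ i : Fin (r + 1), v i * t ^ (i : ℕ))
          = ∑ i ∈ Finset.range (r + 1), q.coeff i * t ^ i := by
        simp only [hv]
        exact Fin.sum_univ_eq_sum_range (fun i => q.coeff i * t ^ i) (r + 1)
      rw [hse, ← he, hq]
      simp
    have hgenint : ∀ s : ℝ, Integrable (fun y => (f y - s) * ((f y - B) ^ k) ^ 2) lam :=
      fun s => hint (fun x => (x - s) * ((x - B) ^ k) ^ 2)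
        ((continuous_id.sub continuous_const).mul
          (((continuous_id.sub continuous_const).pow k).pow 2))
    have hrwa : ∀ s : ℝ, (fun y => (f y - s) * (∑ i : Fin (r + 1), v i * f y ^ (i : ℕ)) ^ 2)
        = fun y => (f y - s) * ((f y - B) ^ k) ^ 2 := by
      intro s; funext y; rw [hpv]
    have h2 := ha.dotProduct_mulVec_nonneg v
    rw [hstar v, quad_form hΩc hf hae r a v, hrwa a] at h2
    have hmono : (∫ y, (f y - a) * ((f y - B) ^ k) ^ 2 ∂lam)
        ≤ ∫ y, (f y - (c + η)) * ((f y - B) ^ k) ^ 2 ∂lam := by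
      refine integral_mono (hgenint a) (hgenint (c + η)) fun y => ?_
      have hP : (0 : ℝ) ≤ ((f y - B) ^ k) ^ 2 := sq_nonneg _
      have : f y - a ≤ f y - (c + η) := by linarith
      exact mul_le_mul_of_nonneg_right this hP
    have hbound : ∀ᵐ y ∂lam, (f y - (c + η)) * ((f y - B) ^ k) ^ 2
        ≤ (C - c) * (β₁ ^ 2) ^ k + G.indicator (fun _ => -(3 * η / 4 * (β₂ ^ 2) ^ k)) y := by
      refine hae.mono fun y hy => ?_
      have hfc : c ≤ f y := hcle y hy
      have hfC : f y ≤ C := hCge y hy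
      have hsqe : ((f y - B) ^ k) ^ 2 = ((B - f y) ^ 2) ^ k := by
        rw [← pow_mul, ← pow_mul, show f y - B = -(B - f y) by ring,
          Even.neg_pow ⟨k, by ring⟩, mul_comm k 2]
      have hP0 : (0 : ℝ) ≤ ((B - f y) ^ 2) ^ k := pow_nonneg (sq_nonneg _) k
      have hnn : 0 ≤ (C - c) * (β₁ ^ 2) ^ k :=
        mul_nonneg (by linarith) (pow_nonneg (sq_nonneg _) k)
      rw [hsqe]
      by_cases hyG : y ∈ G
      · rw [Set.indicator_of_mem hyG]
        have hflt : f y < c + η / 4 := hyG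
        have hb2 : β₂ ≤ B - f y := by rw [hβ₂def]; linarith
        have hb2k : (β₂ ^ 2) ^ k ≤ ((B - f y) ^ 2) ^ k :=
          pow_le_pow_left₀ (sq_nonneg _) (pow_le_pow_left₀ hβ₂0.le hb2 2) k
        have hu : f y - (c + η) ≤ -(3 * η / 4) := by linarith
        have step1 : (f y - (c + η)) * ((B - f y) ^ 2) ^ k
            ≤ -(3 * η / 4) * ((B - f y) ^ 2) ^ k := mul_le_mul_of_nonneg_right hu hP0
        have step2 : -(3 * η / 4) * ((B - f y) ^ 2) ^ k
            ≤ -(3 * η / 4) * (β₂ ^ 2) ^ k := mul_le_mul_of_nonpos_left hb2k (by linarith)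
        linarith
      · rw [Set.indicator_of_notMem hyG]
        by_cases hfy : f y ≤ c + η
        · have hg0 : (f y - (c + η)) * ((B - f y) ^ 2) ^ k ≤ 0 :=
            mul_nonpos_of_nonpos_of_nonneg (by linarith) hP0
          linarith
        · push_neg at hfy
          have hBf : 0 ≤ B - f y := by rw [hBdef]; linarith
          have hb1 : B - f y ≤ β₁ := by rw [hβ₁def]; linarith
          have hb1k : ((B - f y) ^ 2) ^ k ≤ (β₁ ^ 2) ^ k :=
            pow_le_pow_left₀ (sq_nonneg _) (pow_le_pow_left₀ hBf hb1 2) k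
          have := mul_le_mul (show f y - (c + η) ≤ C - c by linarith) hb1k hP0
            (show (0 : ℝ) ≤ C - c by linarith)
          linarith
    have hInth : Integrable (fun y => (C - c) * (β₁ ^ 2) ^ k
        + G.indicator (fun _ => -(3 * η / 4 * (β₂ ^ 2) ^ k)) y) lam :=
      (integrable_const _).add ((integrable_const _).indicator hGopen.measurableSet)
    have hIle : (∫ y, (f y - (c + η)) * ((f y - B) ^ k) ^ 2 ∂lam)
        ≤ ∫ y, ((C - c) * (β₁ ^ 2) ^ k
            + G.indicator (fun _ => -(3 * η / 4 * (β₂ ^ 2) ^ k)) y) ∂lam :=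
      integral_mono_ae (hgenint (c + η)) hInth hbound
    have hIval : (∫ y, ((C - c) * (β₁ ^ 2) ^ k
            + G.indicator (fun _ => -(3 * η / 4 * (β₂ ^ 2) ^ k)) y) ∂lam)
        = (C - c) * (β₁ ^ 2) ^ k * (lam Set.univ).toReal
          + -(3 * η / 4 * (β₂ ^ 2) ^ k) * (lam G).toReal := by
      rw [integral_add (integrable_const _)
          ((integrable_const _).indicator hGopen.measurableSet),
        integral_const, integral_indicator_const _ hGopen.measurableSet,
        smul_eq_mul, smul_eq_mul, measureReal_def, measureReal_def]
      ring
    rw [hIval] at hIle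
    linarith [h2, hmono, hIle, hkey]
  exact lt_of_le_of_lt hcη hηb
end

section
/- The sequence (τu_r(#λ))_{r∈ℕ} converges to the global maximum of f on Ω: lim_{r→∞} τu_r(#λ) = f̄. -/
open MeasureTheory Filter

open Matrix in
lemma measSupp_compl_null {α : Type*} [TopologicalSpace α] [MeasurableSpace α]
    [OpensMeasurableSpace α] [SecondCountableTopology α]
    (μ : MeasureTheory.Measure α) : μ (measSupp μ)ᶜ = 0 := by
  obtain ⟨b, hbc, -, hb⟩ := TopologicalSpace.exists_countable_basis α
  refine MeasureTheory.measure_mono_null (t := ⋃₀ {s ∈ b | μ s = 0}) ?_ ?_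
  · intro x hx
    simp only [measSupp, Set.mem_compl_iff, Set.mem_setOf_eq, not_forall] at hx
    obtain ⟨U, hU, hxU, hμU⟩ := hx
    obtain ⟨s, hsb, hxs, hsU⟩ := hb.exists_subset_of_mem_open hxU hU
    exact ⟨s, ⟨hsb, MeasureTheory.measure_mono_null hsU (not_not.mp hμU)⟩, hxs⟩
  · exact (MeasureTheory.measure_sUnion_null_iff (hbc.mono (Set.sep_subset _ _))).mpr
      fun s hs => hs.2

set_option maxHeartbeats 1000000 in
open Matrix in
/-- τu_r(#λ) → f̄ as r → ∞. -/
theorem tauU_tendsto_max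
    (n : ℕ) (hn : 1 ≤ n) (Ω : Set (Fin n → ℝ))
    (hΩc : IsCompact Ω) (hΩne : Ω.Nonempty)
    (f : (Fin n → ℝ) → ℝ) (hf : Continuous f)
    (lam : MeasureTheory.Measure (Fin n → ℝ)) [MeasureTheory.IsFiniteMeasure lam]
    (hlam : lam ≠ 0) (hsupp : measSupp lam = Ω) :
    Filter.Tendsto (fun r : ℕ => tauU (lam.map f) r) Filter.atTop (nhds (sSup (f '' Ω))) := by
  classical
  have hfm : Measurable f := hf.measurable
  -- the measure is concentrated on Ω
  have hnull : lam Ωᶜ = 0 := by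
    rw [← hsupp]; exact measSupp_compl_null lam
  have hae : ∀ᵐ y ∂lam, y ∈ Ω := by
    rw [MeasureTheory.ae_iff]
    exact hnull
  -- integrability of continuous functions of f
  have hI : ∀ g : ℝ → ℝ, Continuous g → Integrable (fun y => g (f y)) lam := by
    intro g hg
    obtain ⟨C, hC⟩ := hΩc.exists_bound_of_continuousOn ((hg.comp hf).continuousOn)
    exact (MeasureTheory.integrable_const C).mono'
      ((hg.comp hf).aestronglyMeasurable)
      (hae.mono fun y hy => hC y hy)
  -- extrema
  obtain ⟨xM, hxM, hmax⟩ := hΩc.exists_isMaxOn hΩne hf.continuousOn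
  obtain ⟨xc, hxc, hmin⟩ := hΩc.exists_isMinOn hΩne hf.continuousOn
  set M : ℝ := f xM with hM
  set c : ℝ := f xc with hc
  have hfleM : ∀ y ∈ Ω, f y ≤ M := fun y hy => hmax hy
  have hclef : ∀ y ∈ Ω, c ≤ f y := fun y hy => hmin hy
  have hsSup : sSup (f '' Ω) = M := by
    refine IsGreatest.csSup_eq ⟨⟨xM, hxM, rfl⟩, ?_⟩
    rintro _ ⟨y, hy, rfl⟩; exact hfleM y hy
  have hcM : c ≤ M := hclef xM hxM
  rw [hsSup]
  set μ : Measure ℝ := lam.map f with hμdef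
  -- entries of the matrix
  have hentry : ∀ (r : ℕ) (a : ℝ) (i j : Fin (r+1)),
      (a • momentMatrix μ r - locMatrix μ r) i j
        = ∫ y, (a - f y) * f y ^ ((i:ℕ)+(j:ℕ)) ∂lam := by
    intro r a i j
    have h1 : momentMatrix μ r i j = ∫ y, f y ^ ((i:ℕ)+(j:ℕ)) ∂lam := by
      simp only [momentMatrix, hμdef]
      exact MeasureTheory.integral_map hfm.aemeasurable
        (continuous_pow _).aestronglyMeasurable
    have h2 : locMatrix μ r i j = ∫ y, f y ^ ((i:ℕ)+(j:ℕ)+1) ∂lam := by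
      simp only [locMatrix, hμdef]
      exact MeasureTheory.integral_map hfm.aemeasurable
        (continuous_pow _).aestronglyMeasurable
    have hint1 : Integrable (fun y => a * f y ^ ((i:ℕ)+(j:ℕ))) lam :=
      hI (fun z => a * z ^ ((i:ℕ)+(j:ℕ))) (by fun_prop)
    have hint2 : Integrable (fun y => f y ^ ((i:ℕ)+(j:ℕ)+1)) lam :=
      hI (fun z => z ^ ((i:ℕ)+(j:ℕ)+1)) (by fun_prop)
    have : (a • momentMatrix μ r - locMatrix μ r) i j
        = a * (∫ y, f y ^ ((i:ℕ)+(j:ℕ)) ∂lam) - ∫ y, f y ^ ((i:ℕ)+(j:ℕ)+1) ∂lam := by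
      simp [Matrix.sub_apply, Matrix.smul_apply, h1, h2, smul_eq_mul]
    rw [this, ← MeasureTheory.integral_const_mul, ← MeasureTheory.integral_sub hint1 hint2]
    congr 1; funext y; ring
  -- the quadratic form identity
  have hQF : ∀ (r : ℕ) (a : ℝ) (v : Fin (r+1) → ℝ),
      v ⬝ᵥ ((a • momentMatrix μ r - locMatrix μ r) *ᵥ v)
        = ∫ y, (a - f y) * (∑ i : Fin (r+1), v i * f y ^ (i:ℕ))^2 ∂lam := by
    intro r a v
    have hterm : ∀ i j : Fin (r+1),
        Integrable (fun y => v i * ((a - f y) * f y ^ ((i:ℕ)+(j:ℕ)) * v j)) lam := by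
      intro i j
      exact hI (fun z => v i * ((a - z) * z ^ ((i:ℕ)+(j:ℕ)) * v j)) (by fun_prop)
    have hlhs : v ⬝ᵥ ((a • momentMatrix μ r - locMatrix μ r) *ᵥ v)
        = ∑ i : Fin (r+1), v i * ∑ j : Fin (r+1),
            (a • momentMatrix μ r - locMatrix μ r) i j * v j := rfl
    calc v ⬝ᵥ ((a • momentMatrix μ r - locMatrix μ r) *ᵥ v)
        = ∑ i : Fin (r+1), ∑ j : Fin (r+1),
            ∫ y, v i * ((a - f y) * f y ^ ((i:ℕ)+(j:ℕ)) * v j) ∂lam := by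
          rw [hlhs]
          refine Finset.sum_congr rfl fun i _ => ?_
          rw [Finset.mul_sum]
          refine Finset.sum_congr rfl fun j _ => ?_
          rw [hentry r a i j, ← MeasureTheory.integral_mul_const,
            ← MeasureTheory.integral_const_mul]
      _ = ∫ y, ∑ i : Fin (r+1), ∑ j : Fin (r+1),
            v i * ((a - f y) * f y ^ ((i:ℕ)+(j:ℕ)) * v j) ∂lam := by
          rw [MeasureTheory.integral_finset_sum]
          · exact Finset.sum_congr rfl fun i _ =>
              (MeasureTheory.integral_finset_sum _ fun j _ => hterm i j).symm
          · intro i _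
            exact MeasureTheory.integrable_finset_sum _ fun j _ => hterm i j
      _ = ∫ y, (a - f y) * (∑ i : Fin (r+1), v i * f y ^ (i:ℕ))^2 ∂lam := by
          congr 1; funext y
          rw [sq, Finset.sum_mul_sum, Finset.mul_sum]
          refine Finset.sum_congr rfl fun i _ => ?_
          rw [Finset.mul_sum]
          refine Finset.sum_congr rfl fun j _ => ?_
          rw [pow_add]; ring
    -- symmetry / hermitian
  have hherm : ∀ (r : ℕ) (a : ℝ),
      (a • momentMatrix μ r - locMatrix μ r).IsHermitian := by
    intro r a
    unfold Matrix.IsHermitian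
    ext i j
    simp only [Matrix.conjTranspose_apply, star_trivial]
    rw [hentry r a i j, hentry r a j i, Nat.add_comm (j:ℕ) (i:ℕ)]
  have hstar : ∀ (r : ℕ) (v : Fin (r+1) → ℝ), star v = v := by
    intro r v; funext i; exact star_trivial _
  set L : ℝ := (lam Set.univ).toReal with hL
  have hLpos : 0 < L := by
    apply ENNReal.toReal_pos
    · simpa [← MeasureTheory.Measure.measure_univ_eq_zero] using hlam
    · exact (MeasureTheory.measure_lt_top lam _).ne
  -- M is in every set
  have hMmem : ∀ r : ℕ, (M • momentMatrix μ r - locMatrix μ r).PosSemidef := by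
    intro r
    refine .of_dotProduct_mulVec_nonneg (hherm r M) fun v => ?_
    rw [hstar r v, hQF r M v]
    refine MeasureTheory.integral_nonneg_of_ae (hae.mono fun y hy => ?_)
    exact mul_nonneg (sub_nonneg.mpr (hfleM y hy)) (sq_nonneg _)
  -- every member is at least c
  have hlb : ∀ r : ℕ, ∀ a ∈ {a : ℝ | (a • momentMatrix μ r - locMatrix μ r).PosSemidef},
      c ≤ a := by
    intro r a ha
    have hpsd : (a • momentMatrix μ r - locMatrix μ r).PosSemidef := ha
    set w : Fin (r+1) → ℝ := Pi.single (0 : Fin (r+1)) (1:ℝ) with hw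
    have h0 := hpsd.dotProduct_mulVec_nonneg w
    rw [hstar r w, hQF r a w] at h0
    have hone : ∀ z : ℝ, (∑ i : Fin (r+1), w i * z ^ (i:ℕ)) = 1 := by
      intro z
      rw [Finset.sum_eq_single (0 : Fin (r+1))]
      · simp [hw]
      · intro b _ hb; simp [hw, Pi.single_eq_of_ne hb]
      · intro h; exact absurd (Finset.mem_univ _) h
    have h0' : (0:ℝ) ≤ ∫ y, (a - f y) ∂lam := by
      refine le_trans h0 (le_of_eq ?_)
      congr 1; funext y; rw [hone (f y)]; ring
    have hint : Integrable (fun y => a - f y) lam := hI (fun z => a - z) (by fun_prop)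
    have hcomp : ∫ y, (a - f y) ∂lam ≤ ∫ _y, (a - c) ∂lam := by
      refine MeasureTheory.integral_mono_ae hint (MeasureTheory.integrable_const _)
        (hae.mono fun y hy => ?_)
      exact sub_le_sub_left (hclef y hy) a
    rw [MeasureTheory.integral_const, smul_eq_mul, MeasureTheory.measureReal_def] at hcomp
    nlinarith [le_trans h0' hcomp, hLpos]
  have hne : ∀ r : ℕ, {a : ℝ | (a • momentMatrix μ r - locMatrix μ r).PosSemidef}.Nonempty :=
    fun r => ⟨M, hMmem r⟩
  have hbdd : ∀ r : ℕ, BddBelow {a : ℝ | (a • momentMatrix μ r - locMatrix μ r).PosSemidef} :=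
    fun r => ⟨c, fun a ha => hlb r a ha⟩
  have hupper : ∀ r : ℕ, tauU μ r ≤ M := fun r => csInf_le (hbdd r) (hMmem r)
  -- main lower estimate
  have hlower : ∀ ε : ℝ, 0 < ε → ∃ N : ℕ, ∀ r ≥ N, M - ε ≤ tauU μ r := by
    intro ε hε
    set a₀ : ℝ := M - ε with ha₀
    set t : ℝ := min c (M - ε - 1) with ht
    set A : ℝ := M - ε - t with hA
    set B : ℝ := M - ε/2 - t with hB
    have htc : t ≤ c := min_le_left _ _
    have hA1 : 1 ≤ A := by
      have : t ≤ M - ε - 1 := min_le_right _ _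
      rw [hA]; linarith
    have hApos : 0 < A := lt_of_lt_of_le one_pos hA1
    have hAB : A < B := by rw [hA, hB]; linarith
    have hBpos : 0 < B := lt_trans hApos hAB
    -- positivity near the max
    set T : Set (Fin n → ℝ) := f ⁻¹' (Set.Ioi (M - ε/2)) with hT
    have hTopen : IsOpen T := (isOpen_Ioi).preimage hf
    have hTmeas : MeasurableSet T := hTopen.measurableSet
    have hxMT : xM ∈ T := by
      simp only [hT, Set.mem_preimage, Set.mem_Ioi]; linarith
    have hTne : lam T ≠ 0 := by
      have := hsupp ▸ hxM
      exact this T hTopen hxMT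
    set δ : ℝ := (lam T).toReal with hδ
    have hδpos : 0 < δ := ENNReal.toReal_pos hTne (MeasureTheory.measure_lt_top lam _).ne
    -- choose k large
    have hq : A / B < 1 := (div_lt_one hBpos).mpr hAB
    have hq0 : 0 ≤ A / B := le_of_lt (div_pos hApos hBpos)
    have htend : Tendsto (fun k : ℕ => A * L * (A/B) ^ (2*k)) atTop (nhds 0) := by
      have h1 : Tendsto (fun k : ℕ => (A/B) ^ k) atTop (nhds 0) :=
        tendsto_pow_atTop_nhds_zero_of_lt_one hq0 hq
      have h2 : Tendsto (fun k : ℕ => (A/B) ^ (2*k)) atTop (nhds 0) :=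
        h1.comp (tendsto_atTop_atTop_of_monotone (fun _ _ h => by omega)
          (fun b => ⟨b, by omega⟩))
      simpa using h2.const_mul (A * L)
    have hev : ∃ k : ℕ, A * L * (A/B) ^ (2*k) < ε/2 * δ := by
      have := htend.eventually (eventually_lt_nhds (show (0:ℝ) < ε/2 * δ by positivity))
      obtain ⟨k, hk⟩ := this.exists
      exact ⟨k, hk⟩
    obtain ⟨k, hk⟩ := hev
    have hkey : A ^ (2*k+1) * L < ε/2 * B^(2*k) * δ := by
      have hApow : A ^ (2*k) = (A/B)^(2*k) * B^(2*k) := by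
        rw [div_pow, div_mul_cancel₀]
        exact pow_ne_zero _ (ne_of_gt hBpos)
      have hBk : (0:ℝ) < B ^ (2*k) := pow_pos hBpos _
      calc A ^ (2*k+1) * L = (A * L * (A/B)^(2*k)) * B^(2*k) := by
            rw [pow_succ]; rw [hApow]; ring
        _ < (ε/2 * δ) * B^(2*k) := by
            exact mul_lt_mul_of_pos_right hk hBk
        _ = ε/2 * B^(2*k) * δ := by ring
    refine ⟨k, fun r hrk => ?_⟩
    -- the test polynomial
    set p : Polynomial ℝ := (Polynomial.X - Polynomial.C t) ^ k with hp
    set v : Fin (r+1) → ℝ := fun i => p.coeff (i:ℕ) with hv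
    have hdeg : p.natDegree < r + 1 := by
      rw [hp]
      calc ((Polynomial.X - Polynomial.C t) ^ k).natDegree
          ≤ k * (Polynomial.X - Polynomial.C t).natDegree := Polynomial.natDegree_pow_le
        _ = k := by rw [Polynomial.natDegree_X_sub_C]; ring
        _ < r + 1 := by omega
    have hsum : ∀ z : ℝ, (∑ i : Fin (r+1), v i * z ^ (i:ℕ)) = (z - t)^k := by
      intro z
      have h1 : (∑ i : Fin (r+1), v i * z ^ (i:ℕ))
          = ∑ i ∈ Finset.range (r+1), p.coeff i * z ^ i :=
        Fin.sum_univ_eq_sum_range (fun i => p.coeff i * z ^ i) (r+1)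
      rw [h1, ← Polynomial.eval_eq_sum_range' hdeg z, hp]
      simp
    -- the integral is negative
    have hgint : Integrable (fun y => (a₀ - f y) * (f y - t)^(2*k)) lam :=
      hI (fun z => (a₀ - z) * (z - t)^(2*k)) (by fun_prop)
    have hineg : ∫ y, (a₀ - f y) * (f y - t)^(2*k) ∂lam < 0 := by
      have hsplit := MeasureTheory.integral_add_compl hTmeas hgint
      have hTbound : ∫ y in T, (a₀ - f y) * (f y - t)^(2*k) ∂lam
          ≤ -(ε/2 * B^(2*k)) * δ := by
        have hle : ∀ᵐ y ∂(lam.restrict T),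
            (a₀ - f y) * (f y - t)^(2*k) ≤ -(ε/2 * B^(2*k)) := by
          refine ((MeasureTheory.ae_restrict_mem hTmeas).and
            (MeasureTheory.ae_restrict_of_ae hae)).mono ?_
          rintro y ⟨hyT, hyΩ⟩
          have hfy : M - ε/2 < f y := hyT
          have hBle : B ≤ f y - t := by rw [hB]; linarith
          have hpow : B^(2*k) ≤ (f y - t)^(2*k) :=
            pow_le_pow_left₀ (le_of_lt hBpos) hBle _
          have h1 : a₀ - f y ≤ -(ε/2) := by rw [ha₀]; linarith
          calc (a₀ - f y) * (f y - t)^(2*k) ≤ -(ε/2) * (f y - t)^(2*k) := by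
                exact mul_le_mul_of_nonneg_right h1 ((even_two_mul k).pow_nonneg _)
            _ ≤ -(ε/2) * B^(2*k) := by nlinarith [hpow, hε]
            _ = -(ε/2 * B^(2*k)) := by ring
        calc ∫ y in T, (a₀ - f y) * (f y - t)^(2*k) ∂lam
            ≤ ∫ _y in T, -(ε/2 * B^(2*k)) ∂lam :=
              MeasureTheory.integral_mono_ae hgint.integrableOn
                (MeasureTheory.integrableOn_const
                  ((MeasureTheory.measure_lt_top lam _).ne)) hle
          _ = -(ε/2 * B^(2*k)) * δ := by
              rw [MeasureTheory.setIntegral_const, smul_eq_mul, MeasureTheory.measureReal_def]; ring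
      have hTcbound : ∫ y in Tᶜ, (a₀ - f y) * (f y - t)^(2*k) ∂lam
          ≤ A^(2*k+1) * L := by
        have hle : ∀ᵐ y ∂(lam.restrict Tᶜ),
            (a₀ - f y) * (f y - t)^(2*k) ≤ A^(2*k+1) := by
          refine (MeasureTheory.ae_restrict_of_ae hae).mono ?_
          intro y hyΩ
          have hyt : 0 ≤ f y - t := by
            have := hclef y hyΩ; linarith
          by_cases hcase : f y ≤ a₀
          · have hft : f y - t ≤ A := by rw [hA, ha₀] at *; linarith
            have h1 : a₀ - f y ≤ A := by
              have := hclef y hyΩ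
              rw [hA, ha₀] at *; linarith
            calc (a₀ - f y) * (f y - t)^(2*k) ≤ A * A^(2*k) := by
                  apply mul_le_mul (by linarith) (pow_le_pow_left₀ hyt hft _)
                    ((even_two_mul k).pow_nonneg _) (le_of_lt hApos)
              _ = A^(2*k+1) := by rw [pow_succ]; ring
          · have : a₀ - f y < 0 := by linarith
            calc (a₀ - f y) * (f y - t)^(2*k) ≤ 0 :=
                  mul_nonpos_of_nonpos_of_nonneg (le_of_lt this)
                    ((even_two_mul k).pow_nonneg _)
              _ ≤ A^(2*k+1) := by positivity
        calc ∫ y in Tᶜ, (a₀ - f y) * (f y - t)^(2*k) ∂lam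
            ≤ ∫ _y in Tᶜ, A^(2*k+1) ∂lam :=
              MeasureTheory.integral_mono_ae hgint.integrableOn
                (MeasureTheory.integrableOn_const
                  ((MeasureTheory.measure_lt_top lam _).ne)) hle
          _ = A^(2*k+1) * (lam Tᶜ).toReal := by
              rw [MeasureTheory.setIntegral_const, smul_eq_mul, MeasureTheory.measureReal_def]; ring
          _ ≤ A^(2*k+1) * L := by
              apply mul_le_mul_of_nonneg_left _ (by positivity)
              apply ENNReal.toReal_mono (MeasureTheory.measure_lt_top lam _).ne
              exact MeasureTheory.measure_mono (Set.subset_univ _)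
      calc ∫ y, (a₀ - f y) * (f y - t)^(2*k) ∂lam
          = (∫ y in T, (a₀ - f y) * (f y - t)^(2*k) ∂lam)
            + ∫ y in Tᶜ, (a₀ - f y) * (f y - t)^(2*k) ∂lam := hsplit.symm
        _ ≤ -(ε/2 * B^(2*k)) * δ + A^(2*k+1) * L := add_le_add hTbound hTcbound
        _ < 0 := by nlinarith [hkey]
    -- conclude the lower bound
    have hmemlb : ∀ b ∈ {b : ℝ | (b • momentMatrix μ r - locMatrix μ r).PosSemidef},
        a₀ ≤ b := by
      intro b hb
      by_contra hba
      push_neg at hba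
      have h0 := hb.dotProduct_mulVec_nonneg v
      rw [hstar r v, hQF r b v] at h0
      have heq : (fun y => (b - f y) * (∑ i : Fin (r+1), v i * f y ^ (i:ℕ))^2)
          = fun y => (b - f y) * ((f y - t)^k)^2 := by
        funext y; rw [hsum (f y)]
      rw [heq] at h0
      have hmono : ∫ y, (b - f y) * ((f y - t)^k)^2 ∂lam
          ≤ ∫ y, (a₀ - f y) * (f y - t)^(2*k) ∂lam := by
        have hbint : Integrable (fun y => (b - f y) * ((f y - t)^k)^2) lam :=
          hI (fun z => (b - z) * ((z - t)^k)^2) (by fun_prop)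
        have hgint' : Integrable (fun y => (a₀ - f y) * (f y - t)^(2*k)) lam := hgint
        refine MeasureTheory.integral_mono hbint hgint' fun y => ?_
        have hpow : ((f y - t)^k)^2 = (f y - t)^(2*k) := by
          rw [← pow_mul, Nat.mul_comm]
        rw [hpow]
        refine mul_le_mul_of_nonneg_right (by linarith) ((even_two_mul k).pow_nonneg _)
      linarith [lt_of_le_of_lt hmono hineg]
    exact le_csInf (hne r) hmemlb
  -- assemble the limit
  rw [Metric.tendsto_atTop]
  intro ε hε
  obtain ⟨N, hN⟩ := hlower (ε/2) (by linarith)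
  refine ⟨N, fun r hr => ?_⟩
  have h1 := hupper r
  have h2 := hN r hr
  rw [Real.dist_eq, abs_lt]
  constructor <;> [linarith; linarith]
end

section
/- Finite convergence for finite sets: with r̄ := card(Z) − 1, one has τℓ_{r̄}(#λ) = min Z (the global minimum of f on Ω) and τu_{r̄}(#λ) = max Z (the global maximum of f on Ω). -/
open MeasureTheory Filter

section Helpers

open Polynomial in
lemma interp_exists (Z : Finset ℝ) (z0 : ℝ) (hz0 : z0 ∈ Z) (r : ℕ) (hr : Z.card = r + 1) :
    ∃ p : Fin (r + 1) → ℝ,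
      (∀ x ∈ Z, x ≠ z0 → (∑ i : Fin (r + 1), p i * x ^ (i : ℕ)) = 0) ∧
      (∑ i : Fin (r + 1), p i * z0 ^ (i : ℕ)) ≠ 0 := by
  classical
  set q : ℝ[X] := ∏ z ∈ Z.erase z0, (X - C z) with hq
  have hdeg : q.natDegree = r := by
    rw [hq, natDegree_prod _ _ (fun z _ => X_sub_C_ne_zero z)]
    simp [Finset.card_erase_of_mem hz0, hr]
  have heval : ∀ x : ℝ, (∑ i : Fin (r + 1), q.coeff i * x ^ (i : ℕ)) = q.eval x := by
    intro x
    rw [Fin.sum_univ_eq_sum_range (fun i => q.coeff i * x ^ i)]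
    exact (eval_eq_sum_range' (by omega) x).symm
  refine ⟨fun i => q.coeff i, ?_, ?_⟩
  · intro x hx hne
    rw [heval, hq, eval_prod]
    exact Finset.prod_eq_zero (Finset.mem_erase.mpr ⟨hne, hx⟩) (by simp)
  · rw [heval, hq, eval_prod]
    refine Finset.prod_ne_zero_iff.mpr fun z hz => ?_
    simp only [eval_sub, eval_X, eval_C, sub_ne_zero]
    exact fun h => (Finset.mem_erase.mp hz).1 h.symm

lemma weight_nonneg {α : Type*} (Ω : Finset α) (f : α → ℝ) (r : ℕ)
    (hr : (Ω.image f).card = r + 1) (z0 : ℝ) (hz0 : z0 ∈ Ω.image f) (w : ℝ → ℝ)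
    (h : ∀ p : Fin (r + 1) → ℝ,
      0 ≤ ∑ v ∈ Ω, w (f v) * (∑ i : Fin (r + 1), p i * f v ^ (i : ℕ)) ^ 2) :
    0 ≤ w z0 := by
  classical
  obtain ⟨p, hp0, hpz⟩ := interp_exists (Ω.image f) z0 hz0 r hr
  have hs := h p
  rw [← Finset.sum_filter_add_sum_filter_not Ω (fun v => f v = z0)] at hs
  have h2 : ∑ v ∈ Ω.filter (fun v => ¬ f v = z0),
      w (f v) * (∑ i : Fin (r + 1), p i * f v ^ (i : ℕ)) ^ 2 = 0 := by
    refine Finset.sum_eq_zero fun v hv => ?_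
    rw [Finset.mem_filter] at hv
    rw [hp0 (f v) (Finset.mem_image_of_mem f hv.1) hv.2]
    ring
  have h1 : ∑ v ∈ Ω.filter (fun v => f v = z0),
      w (f v) * (∑ i : Fin (r + 1), p i * f v ^ (i : ℕ)) ^ 2
      = ((Ω.filter (fun v => f v = z0)).card : ℝ) *
        (w z0 * (∑ i : Fin (r + 1), p i * z0 ^ (i : ℕ)) ^ 2) := by
    rw [Finset.sum_congr rfl (fun v hv => by rw [(Finset.mem_filter.mp hv).2]),
      Finset.sum_const, nsmul_eq_mul]
  rw [h1, h2, add_zero] at hs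
  obtain ⟨v0, hv0, hfv0⟩ := Finset.mem_image.mp hz0
  have hcard : 0 < ((Ω.filter fun v => f v = z0).card : ℝ) := by
    exact_mod_cast Finset.card_pos.mpr ⟨v0, Finset.mem_filter.mpr ⟨hv0, hfv0⟩⟩
  have hsq : 0 < (∑ i : Fin (r + 1), p i * z0 ^ (i : ℕ)) ^ 2 := by positivity
  have h3 := (mul_nonneg_iff_of_pos_left hcard).mp hs
  exact (mul_nonneg_iff_of_pos_right hsq).mp h3

lemma integrable_dirac_any {α : Type*} [MeasurableSpace α] [MeasurableSingletonClass α]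
    (f : α → ℝ) (a : α) : Integrable f (Measure.dirac a) :=
  (integrable_const (f a)).congr (ae_eq_dirac f).symm

end Helpers

section MeasurePart

lemma map_counting {n : ℕ} (Ω : Finset (Fin n → ℝ)) (f : (Fin n → ℝ) → ℝ) :
    (∑ v ∈ Ω, Measure.dirac v : Measure (Fin n → ℝ)).map f = ∑ v ∈ Ω, Measure.dirac (f v) := by
  classical
  set g : (Fin n → ℝ) → ℝ := fun x => ∑ v ∈ Ω, Set.indicator ({v} : Set _) (fun _ => f v) x
    with hgdef
  have hgm : Measurable g :=
    Finset.measurable_sum _ fun v _ => measurable_const.indicator (measurableSet_singleton v)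
  have hgf : ∀ v ∈ Ω, g v = f v := by
    intro v hv
    show (∑ w ∈ Ω, Set.indicator ({w} : Set _) (fun _ => f w) v) = f v
    rw [Finset.sum_eq_single v (fun w _ hne => by
      simp [Set.indicator_of_notMem, (by simp [hne.symm] : v ∉ ({w} : Set _))])
      (fun h => absurd hv h)]
    simp
  have hae : f =ᵐ[∑ v ∈ Ω, Measure.dirac v] g := by
    rw [Filter.EventuallyEq, ae_iff]
    rw [Measure.finset_sum_apply]
    refine Finset.sum_eq_zero fun v hv => ?_
    rw [Measure.dirac_apply]
    exact Set.indicator_of_notMem (by simp [hgf v hv]) _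
  rw [Measure.map_congr hae]
  have key : ∀ s : Finset (Fin n → ℝ),
      (∑ v ∈ s, Measure.dirac v : Measure (Fin n → ℝ)).map g = ∑ v ∈ s, Measure.dirac (g v) := by
    intro s
    induction s using Finset.induction with
    | empty => simp [Measure.map_zero]
    | insert _ _ hnotmem ih =>
        rw [Finset.sum_insert hnotmem, Measure.map_add _ _ hgm, ih,
          Measure.map_dirac' hgm, Finset.sum_insert hnotmem]
  rw [key Ω]
  exact Finset.sum_congr rfl fun v hv => by rw [hgf v hv]

lemma moment_eq {n : ℕ} (Ω : Finset (Fin n → ℝ)) (f : (Fin n → ℝ) → ℝ) (k : ℕ) :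
    ∫ x, x ^ k ∂((∑ v ∈ Ω, Measure.dirac v : Measure (Fin n → ℝ)).map f)
      = ∑ v ∈ Ω, f v ^ k := by
  rw [map_counting, integral_finset_sum_measure fun v _ => integrable_dirac_any _ _]
  exact Finset.sum_congr rfl fun v _ => by rw [integral_dirac]

end MeasurePart

lemma quad_form_s6 {α : Type*} (Ω : Finset α) (f : α → ℝ) (a : ℝ) (r : ℕ) (p : Fin (r + 1) → ℝ) :
    dotProduct p
      (Matrix.mulVec (fun i j : Fin (r + 1) =>
          (∑ v ∈ Ω, f v ^ ((i : ℕ) + (j : ℕ) + 1)) - a * ∑ v ∈ Ω, f v ^ ((i : ℕ) + (j : ℕ))) p)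
      = ∑ v ∈ Ω, (f v - a) * (∑ i : Fin (r + 1), p i * f v ^ (i : ℕ)) ^ 2 := by
  classical
  have h1 : ∀ x : ℝ, (x - a) * (∑ i : Fin (r + 1), p i * x ^ (i : ℕ)) ^ 2
      = ∑ i : Fin (r + 1), ∑ j : Fin (r + 1),
          p i * p j * (x ^ ((i : ℕ) + (j : ℕ) + 1) - a * x ^ ((i : ℕ) + (j : ℕ))) := by
    intro x
    rw [sq, Finset.sum_mul_sum, Finset.mul_sum]
    refine Finset.sum_congr rfl fun i _ => ?_
    rw [Finset.mul_sum]
    refine Finset.sum_congr rfl fun j _ => ?_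
    simp only [pow_add, pow_one]
    ring
  simp only [Matrix.mulVec, dotProduct]
  calc
    ∑ i : Fin (r + 1), p i * ∑ j : Fin (r + 1),
        ((∑ v ∈ Ω, f v ^ ((i : ℕ) + (j : ℕ) + 1)) - a * ∑ v ∈ Ω, f v ^ ((i : ℕ) + (j : ℕ))) * p j
      = ∑ i : Fin (r + 1), ∑ j : Fin (r + 1), ∑ v ∈ Ω,
          p i * p j * (f v ^ ((i : ℕ) + (j : ℕ) + 1) - a * f v ^ ((i : ℕ) + (j : ℕ))) := by
        refine Finset.sum_congr rfl fun i _ => ?_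
        rw [Finset.mul_sum]
        refine Finset.sum_congr rfl fun j _ => ?_
        have hsub : (∑ v ∈ Ω, f v ^ ((i : ℕ) + (j : ℕ) + 1))
            - a * ∑ v ∈ Ω, f v ^ ((i : ℕ) + (j : ℕ))
            = ∑ v ∈ Ω, (f v ^ ((i : ℕ) + (j : ℕ) + 1) - a * f v ^ ((i : ℕ) + (j : ℕ))) := by
          rw [Finset.mul_sum, ← Finset.sum_sub_distrib]
        rw [hsub, Finset.sum_mul, Finset.mul_sum]
        exact Finset.sum_congr rfl fun v _ => by ring
    _ = ∑ v ∈ Ω, ∑ i : Fin (r + 1), ∑ j : Fin (r + 1),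
          p i * p j * (f v ^ ((i : ℕ) + (j : ℕ) + 1) - a * f v ^ ((i : ℕ) + (j : ℕ))) := by
        exact (Finset.sum_congr rfl fun i _ => Finset.sum_comm ..).trans (Finset.sum_comm ..)
    _ = ∑ v ∈ Ω, (f v - a) * (∑ i : Fin (r + 1), p i * f v ^ (i : ℕ)) ^ 2 :=
        Finset.sum_congr rfl fun v _ => (h1 (f v)).symm

/-- Finite convergence for finite sets: with r̄ = card(Z) − 1,
τℓ_{r̄}(#λ) = min Z and τu_{r̄}(#λ) = max Z. -/
theorem tau_finite_convergence
    (n : ℕ) (hn : 1 ≤ n) (Ω : Finset (Fin n → ℝ)) (hΩ : Ω.Nonempty)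
    (f : (Fin n → ℝ) → ℝ)
    (lam : MeasureTheory.Measure (Fin n → ℝ))
    (hlam : lam = ∑ v ∈ Ω, MeasureTheory.Measure.dirac v) :
    tauL (lam.map f) ((Ω.image f).card - 1) = (Ω.image f).min' (hΩ.image f) ∧
      tauU (lam.map f) ((Ω.image f).card - 1) = (Ω.image f).max' (hΩ.image f) := by
  classical
  set r : ℕ := (Ω.image f).card - 1 with hrdef
  have hZne : (Ω.image f).Nonempty := hΩ.image f
  have hZc : (Ω.image f).card = r + 1 :=
    (Nat.succ_pred_eq_of_pos (Finset.card_pos.mpr hZne)).symm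
  have hL : locMatrix (lam.map f) r
      = fun i j : Fin (r + 1) => ∑ v ∈ Ω, f v ^ ((i : ℕ) + (j : ℕ) + 1) := by
    funext i j
    rw [locMatrix, hlam]
    exact moment_eq Ω f _
  have hMM : momentMatrix (lam.map f) r
      = fun i j : Fin (r + 1) => ∑ v ∈ Ω, f v ^ ((i : ℕ) + (j : ℕ)) := by
    funext i j
    rw [momentMatrix, hlam]
    exact moment_eq Ω f _
  have hD : ∀ a : ℝ, locMatrix (lam.map f) r - a • momentMatrix (lam.map f) r
      = fun i j : Fin (r + 1) =>
          (∑ v ∈ Ω, f v ^ ((i : ℕ) + (j : ℕ) + 1)) - a * ∑ v ∈ Ω, f v ^ ((i : ℕ) + (j : ℕ)) := by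
    intro a
    rw [hL, hMM]
    funext i j
    rfl
  have hquadL : ∀ (a : ℝ) (p : Fin (r + 1) → ℝ),
      dotProduct (star p)
        ((locMatrix (lam.map f) r - a • momentMatrix (lam.map f) r).mulVec p)
      = ∑ v ∈ Ω, (f v - a) * (∑ i : Fin (r + 1), p i * f v ^ (i : ℕ)) ^ 2 := by
    intro a p
    rw [star_trivial, hD a]
    exact quad_form_s6 Ω f a r p
  have hquadU : ∀ (a : ℝ) (p : Fin (r + 1) → ℝ),
      dotProduct (star p)
        ((a • momentMatrix (lam.map f) r - locMatrix (lam.map f) r).mulVec p)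
      = ∑ v ∈ Ω, (a - f v) * (∑ i : Fin (r + 1), p i * f v ^ (i : ℕ)) ^ 2 := by
    intro a p
    have hneg : a • momentMatrix (lam.map f) r - locMatrix (lam.map f) r
        = -(locMatrix (lam.map f) r - a • momentMatrix (lam.map f) r) := by rw [neg_sub]
    rw [hneg, Matrix.neg_mulVec, dotProduct_neg, hquadL a p, ← Finset.sum_neg_distrib]
    exact Finset.sum_congr rfl fun v _ => by ring
  have hhermL : ∀ a : ℝ,
      (locMatrix (lam.map f) r - a • momentMatrix (lam.map f) r).IsHermitian := by
    intro a
    show Matrix.conjTranspose (locMatrix (Measure.map f lam) r - a • momentMatrix (Measure.map f lam) r)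
      = locMatrix (Measure.map f lam) r - a • momentMatrix (Measure.map f lam) r
    rw [hD a]
    ext i j
    show star ((∑ v ∈ Ω, f v ^ ((j : ℕ) + (i : ℕ) + 1)) - a * ∑ v ∈ Ω, f v ^ ((j : ℕ) + (i : ℕ))) = _
    simp [Nat.add_comm (i : ℕ) (j : ℕ)]
  have hhermU : ∀ a : ℝ,
      (a • momentMatrix (lam.map f) r - locMatrix (lam.map f) r).IsHermitian := by
    intro a
    have : a • momentMatrix (lam.map f) r - locMatrix (lam.map f) r
        = -(locMatrix (lam.map f) r - a • momentMatrix (lam.map f) r) := by rw [neg_sub]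
    rw [this]
    exact (hhermL a).neg
  have hmem : ∀ v ∈ Ω, f v ∈ Ω.image f := fun v hv => Finset.mem_image_of_mem f hv
  have hsetL : {a : ℝ | (locMatrix (lam.map f) r - a • momentMatrix (lam.map f) r).PosSemidef}
      = Set.Iic ((Ω.image f).min' hZne) := by
    ext a
    simp only [Set.mem_setOf_eq, Set.mem_Iic]
    constructor
    · intro h
      have key := weight_nonneg Ω f r hZc ((Ω.image f).min' hZne)
        (Finset.min'_mem _ _) (fun x => x - a)
        (fun p => by rw [← hquadL a p]; exact h.dotProduct_mulVec_nonneg p)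
      simp only [sub_nonneg] at key
      exact key
    · intro ha
      refine Matrix.PosSemidef.of_dotProduct_mulVec_nonneg (hhermL a) fun p => ?_
      rw [hquadL a p]
      refine Finset.sum_nonneg fun v hv => mul_nonneg ?_ (sq_nonneg _)
      have := Finset.min'_le (Ω.image f) (f v) (hmem v hv)
      linarith
  have hsetU : {a : ℝ | (a • momentMatrix (lam.map f) r - locMatrix (lam.map f) r).PosSemidef}
      = Set.Ici ((Ω.image f).max' hZne) := by
    ext a
    simp only [Set.mem_setOf_eq, Set.mem_Ici]
    constructor
    · intro h
      have key := weight_nonneg Ω f r hZc ((Ω.image f).max' hZne)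
        (Finset.max'_mem _ _) (fun x => a - x)
        (fun p => by rw [← hquadU a p]; exact h.dotProduct_mulVec_nonneg p)
      simp only [sub_nonneg] at key
      exact key
    · intro ha
      refine Matrix.PosSemidef.of_dotProduct_mulVec_nonneg (hhermU a) fun p => ?_
      rw [hquadU a p]
      refine Finset.sum_nonneg fun v hv => mul_nonneg ?_ (sq_nonneg _)
      have := Finset.le_max' (Ω.image f) (f v) (hmem v hv)
      linarith
  constructor
  · rw [tauL, hsetL, csSup_Iic]
  · rw [tauU, hsetU, csInf_Ici]
end

section
/- Assume the support of #λ is infinite, and let (T_j), a_j, b_j and J_r be associated with μ = #λ as in the context. Then for every r ∈ ℕ, the smallest eigenvalue of the symmetric matrix J_r equals τℓ_r(#λ) and the largest eigenvalue of J_r equals τu_r(#λ). -/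
open MeasureTheory Filter

namespace JacobiAux

open Matrix

open Matrix

variable {d : ℕ}

lemma dot_self_pos {v : Fin d → ℝ} (hv : v ≠ 0) : 0 < v ⬝ᵥ v := by
  obtain ⟨i, hi⟩ := Function.ne_iff.mp hv
  exact Finset.sum_pos' (fun j _ => mul_self_nonneg _)
    ⟨i, Finset.mem_univ i, mul_self_pos.mpr hi⟩

lemma matEigs_eq_range (S : Matrix (Fin d) (Fin d) ℝ) (hS : S.IsHermitian) :
    matEigs S = Set.range hS.eigenvalues := by
  ext t
  constructor
  · rintro ⟨v, hv, hEq⟩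
    have hts : t ∈ spectrum ℝ S := by
      rw [spectrum.mem_iff]
      intro hu
      have hdet : (algebraMap ℝ (Matrix (Fin d) (Fin d) ℝ) t - S).det ≠ 0 := by
        have := (Matrix.isUnit_iff_isUnit_det _).mp hu
        exact IsUnit.ne_zero this
      have hker : (algebraMap ℝ (Matrix (Fin d) (Fin d) ℝ) t - S) *ᵥ v = 0 := by
        rw [Algebra.algebraMap_eq_smul_one, Matrix.sub_mulVec, hEq,
          Matrix.smul_mulVec, Matrix.one_mulVec, sub_self]
      have := Matrix.exists_mulVec_eq_zero_iff.mp ⟨v, hv, hker⟩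
      exact hdet this
    rw [hS.spectrum_real_eq_range_eigenvalues] at hts
    exact hts
  · rintro ⟨i, rfl⟩
    exact ⟨⇑(hS.eigenvectorBasis i), fun h => hS.eigenvectorBasis.orthonormal.ne_zero i
      (by simpa using congrArg (WithLp.toLp 2) h), hS.mulVec_eigenvectorBasis i⟩

lemma eig_nonneg_of_psd {S : Matrix (Fin d) (Fin d) ℝ} (hS : S.PosSemidef)
    {t : ℝ} (ht : t ∈ matEigs S) : 0 ≤ t := by
  obtain ⟨v, hv, hEq⟩ := ht
  have h1 : (0:ℝ) ≤ star v ⬝ᵥ (S *ᵥ v) := hS.dotProduct_mulVec_nonneg v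
  rw [hEq, star_trivial] at h1
  have h2 : v ⬝ᵥ (t • v) = t * (v ⬝ᵥ v) := by
    rw [dotProduct_smul]; rfl
  rw [h2] at h1
  have h3 := dot_self_pos hv
  nlinarith

lemma isHermitian_sub_smul_one {S : Matrix (Fin d) (Fin d) ℝ} (hS : S.IsHermitian) (a : ℝ) :
    (S - a • (1 : Matrix (Fin d) (Fin d) ℝ)).IsHermitian := by
  unfold Matrix.IsHermitian at *
  rw [Matrix.conjTranspose_sub, hS, Matrix.conjTranspose_smul, Matrix.conjTranspose_one,
    star_trivial]

lemma isHermitian_smul_one_sub {S : Matrix (Fin d) (Fin d) ℝ} (hS : S.IsHermitian) (a : ℝ) :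
    (a • (1 : Matrix (Fin d) (Fin d) ℝ) - S).IsHermitian := by
  unfold Matrix.IsHermitian at *
  rw [Matrix.conjTranspose_sub, hS, Matrix.conjTranspose_smul, Matrix.conjTranspose_one,
    star_trivial]

lemma psd_sub_smul_iff {S : Matrix (Fin d) (Fin d) ℝ} (hS : S.IsHermitian) (a : ℝ) :
    (S - a • (1 : Matrix (Fin d) (Fin d) ℝ)).PosSemidef ↔ ∀ t ∈ matEigs S, a ≤ t := by
  constructor
  · intro h t ht
    obtain ⟨v, hv, hEq⟩ := ht
    have hme : (S - a • (1 : Matrix (Fin d) (Fin d) ℝ)) *ᵥ v = (t - a) • v := by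
      rw [Matrix.sub_mulVec, hEq, Matrix.smul_mulVec, Matrix.one_mulVec, sub_smul]
    have := eig_nonneg_of_psd h ⟨v, hv, hme⟩
    linarith
  · intro h
    have hH := isHermitian_sub_smul_one hS a
    apply hH.posSemidef_iff_eigenvalues_nonneg.mpr
    intro i
    have hmem : hH.eigenvalues i ∈ matEigs (S - a • 1) :=
      (matEigs_eq_range _ hH) ▸ Set.mem_range_self i
    obtain ⟨v, hv, hEq⟩ := hmem
    have hSv : S *ᵥ v = (hH.eigenvalues i + a) • v := by
      rw [Matrix.sub_mulVec, Matrix.smul_mulVec, Matrix.one_mulVec,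
        sub_eq_iff_eq_add] at hEq
      rw [hEq, add_smul]
    have := h _ ⟨v, hv, hSv⟩
    linarith [show (0 : Fin d → ℝ) i = 0 from rfl]

lemma psd_smul_sub_iff {S : Matrix (Fin d) (Fin d) ℝ} (hS : S.IsHermitian) (a : ℝ) :
    (a • (1 : Matrix (Fin d) (Fin d) ℝ) - S).PosSemidef ↔ ∀ t ∈ matEigs S, t ≤ a := by
  constructor
  · intro h t ht
    obtain ⟨v, hv, hEq⟩ := ht
    have hme : (a • (1 : Matrix (Fin d) (Fin d) ℝ) - S) *ᵥ v = (a - t) • v := by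
      rw [Matrix.sub_mulVec, hEq, Matrix.smul_mulVec, Matrix.one_mulVec, sub_smul]
    have := eig_nonneg_of_psd h ⟨v, hv, hme⟩
    linarith
  · intro h
    have hH := isHermitian_smul_one_sub hS a
    apply hH.posSemidef_iff_eigenvalues_nonneg.mpr
    intro i
    have hmem : hH.eigenvalues i ∈ matEigs (a • 1 - S) :=
      (matEigs_eq_range _ hH) ▸ Set.mem_range_self i
    obtain ⟨v, hv, hEq⟩ := hmem
    have hSv : S *ᵥ v = (a - hH.eigenvalues i) • v := by
      rw [Matrix.sub_mulVec, Matrix.smul_mulVec, Matrix.one_mulVec,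
        sub_eq_iff_eq_add] at hEq
      have : S *ᵥ v = a • v - hH.eigenvalues i • v := by
        rw [hEq]; abel
      rw [this, ← sub_smul]
    have := h _ ⟨v, hv, hSv⟩
    linarith [show (0 : Fin d → ℝ) i = 0 from rfl]

lemma conjTranspose_eq_transpose_real (B : Matrix (Fin d) (Fin d) ℝ) : Bᴴ = Bᵀ := by
  ext i j
  simp [Matrix.conjTranspose_apply]

lemma psd_conj_iff (X N M : Matrix (Fin d) (Fin d) ℝ) (hNM : N * M = 1) :
    (Nᵀ * X * N).PosSemidef ↔ X.PosSemidef := by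
  constructor
  · intro h
    have h2 := h.conjTranspose_mul_mul_same M
    rw [conjTranspose_eq_transpose_real] at h2
    have hMN : Mᵀ * Nᵀ = 1 := by
      rw [← Matrix.transpose_mul, hNM, Matrix.transpose_one]
    have he : Mᵀ * (Nᵀ * X * N) * M = X := by
      calc Mᵀ * (Nᵀ * X * N) * M = (Mᵀ * Nᵀ) * X * (N * M) := by
            simp only [Matrix.mul_assoc]
        _ = X := by rw [hMN, hNM, Matrix.one_mul, Matrix.mul_one]
    rwa [he] at h2
  · intro h
    have h2 := h.conjTranspose_mul_mul_same N
    rwa [conjTranspose_eq_transpose_real] at h2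

lemma sandwich (X Y N M : Matrix (Fin d) (Fin d) ℝ) (hMN : M * N = 1) (hNM : N * M = 1)
    (h : Mᵀ * X * M = Y) : X = Nᵀ * Y * N := by
  subst h
  have h1 : Nᵀ * Mᵀ = 1 := by rw [← Matrix.transpose_mul, hMN, Matrix.transpose_one]
  calc X = (Nᵀ * Mᵀ) * X * (M * N) := by rw [h1, hMN, Matrix.one_mul, Matrix.mul_one]
    _ = Nᵀ * (Mᵀ * X * M) * N := by simp only [Matrix.mul_assoc]

lemma matEigs_nonempty (S : Matrix (Fin (d+1)) (Fin (d+1)) ℝ) (hS : S.IsHermitian) :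
    (matEigs S).Nonempty := by
  rw [matEigs_eq_range S hS]
  exact Set.range_nonempty _

lemma matEigs_finite (S : Matrix (Fin (d+1)) (Fin (d+1)) ℝ) (hS : S.IsHermitian) :
    (matEigs S).Finite := by
  rw [matEigs_eq_range S hS]
  exact Set.finite_range _

/-- The key abstract lemma. -/
lemma key (H L J N M : Matrix (Fin (d+1)) (Fin (d+1)) ℝ) (hJ : J.IsHermitian)
    (hMN : M * N = 1) (hNM : N * M = 1)
    (hH : Mᵀ * H * M = 1) (hL : Mᵀ * L * M = J) :
    matMinEig J = sSup {a : ℝ | (L - a • H).PosSemidef} ∧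
      matMaxEig J = sInf {a : ℝ | (a • H - L).PosSemidef} := by
  have hHe : H = Nᵀ * 1 * N := sandwich H 1 N M hMN hNM hH
  have hLe : L = Nᵀ * J * N := sandwich L J N M hMN hNM hL
  have hsub : ∀ a : ℝ, L - a • H = Nᵀ * (J - a • (1 : Matrix (Fin (d+1)) (Fin (d+1)) ℝ)) * N := by
    intro a
    rw [hHe, hLe, Matrix.mul_sub, Matrix.sub_mul]
    congr 1
    rw [Matrix.mul_smul, Matrix.smul_mul]
  have hsub' : ∀ a : ℝ, a • H - L = Nᵀ * (a • (1 : Matrix (Fin (d+1)) (Fin (d+1)) ℝ) - J) * N := by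
    intro a
    rw [hHe, hLe, Matrix.mul_sub, Matrix.sub_mul]
    congr 1
    rw [Matrix.mul_smul, Matrix.smul_mul]
  have hne := matEigs_nonempty J hJ
  have hbddb := (matEigs_finite J hJ).bddBelow
  have hbdda := (matEigs_finite J hJ).bddAbove
  constructor
  · have hset : {a : ℝ | (L - a • H).PosSemidef} = Set.Iic (matMinEig J) := by
      ext a
      rw [Set.mem_setOf_eq, hsub a, psd_conj_iff _ N M hNM, psd_sub_smul_iff hJ a]
      rw [Set.mem_Iic]
      exact (le_csInf_iff hbddb hne).symm
    rw [hset, csSup_Iic]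
  · have hset : {a : ℝ | (a • H - L).PosSemidef} = Set.Ici (matMaxEig J) := by
      ext a
      rw [Set.mem_setOf_eq, hsub' a, psd_conj_iff _ N M hNM, psd_smul_sub_iff hJ a]
      rw [Set.mem_Ici]
      exact (csSup_le_iff hbdda hne).symm
    rw [hset, csInf_Ici]

end JacobiAux

/-- The smallest (resp. largest) eigenvalue of the truncated Jacobi matrix J_r associated with
μ = #λ equals τℓ_r(#λ) (resp. τu_r(#λ)). -/
theorem jacobi_eig_eq_tau
    (n : ℕ) (hn : 1 ≤ n) (Ω : Set (Fin n → ℝ))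
    (hΩc : IsCompact Ω) (hΩne : Ω.Nonempty)
    (f : (Fin n → ℝ) → ℝ) (hf : Continuous f)
    (lam : MeasureTheory.Measure (Fin n → ℝ)) [MeasureTheory.IsFiniteMeasure lam]
    (hlam : lam ≠ 0) (hsupp : measSupp lam = Ω)
    (μ : MeasureTheory.Measure ℝ) [MeasureTheory.IsFiniteMeasure μ]
    (hμinf : (measSupp μ).Infinite)
    (T : ℕ → Polynomial ℝ) (a b : ℕ → ℝ)
    (hdeg : ∀ j : ℕ, (T j).degree = (j : ℕ))
    (horth : ∀ i j : ℕ,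
      (∫ x : ℝ, (T i).eval x * (T j).eval x ∂μ) = if i = j then 1 else 0)
    (hapos : ∀ j : ℕ, 0 < a j)
    (hrec0 : ∀ x : ℝ, x * (T 0).eval x = a 0 * (T 1).eval x + b 0 * (T 0).eval x)
    (hrec : ∀ (j : ℕ) (x : ℝ), x * (T (j + 1)).eval x =
      a (j + 1) * (T (j + 2)).eval x + b (j + 1) * (T (j + 1)).eval x + a j * (T j).eval x)
    (hμ : μ = lam.map f)
    (r : ℕ) :
    matMinEig (jacobiMatrix a b r) = tauL (lam.map f) r ∧
      matMaxEig (jacobiMatrix a b r) = tauU (lam.map f) r := by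
  rw [← hμ]
  -- basic polynomial facts
  have hTnd : ∀ k : ℕ, (T k).natDegree = k := fun k =>
    Polynomial.natDegree_eq_of_degree_eq_some (hdeg k)
  have hTne : ∀ k : ℕ, T k ≠ 0 := by
    intro k hk
    have := hdeg k
    rw [hk, Polynomial.degree_zero] at this
    exact (by simp at this)
  -- integrability of products of the T's
  have hT2 : ∀ k : ℕ, Integrable (fun x => (T k).eval x * (T k).eval x) μ := by
    intro k
    by_contra hcon
    have h0 := integral_undef hcon
    rw [horth k k] at h0
    simp at h0
  have hTT : ∀ p q : ℕ, Integrable (fun x => (T p).eval x * (T q).eval x) μ := by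
    intro p q
    have hint : Integrable (fun x => (T p).eval x * (T p).eval x
        + (T q).eval x * (T q).eval x) μ := (hT2 p).add (hT2 q)
    apply hint.mono' (((T p).continuous.mul (T q).continuous).aestronglyMeasurable)
    filter_upwards with x
    have h1 := sq_nonneg ((T p).eval x - (T q).eval x)
    have h2 := sq_nonneg ((T p).eval x + (T q).eval x)
    rw [Pi.mul_apply, Real.norm_eq_abs, abs_le]
    constructor <;> nlinarith
  have hxTTfun0 : ∀ q : ℕ, ∀ x : ℝ, x * (T 0).eval x * (T q).eval x =
      a 0 * ((T 1).eval x * (T q).eval x) + b 0 * ((T 0).eval x * (T q).eval x) := by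
    intro q x
    rw [hrec0 x]; ring
  have hxTTfunS : ∀ j q : ℕ, ∀ x : ℝ, x * (T (j+1)).eval x * (T q).eval x =
      a (j+1) * ((T (j+2)).eval x * (T q).eval x)
        + b (j+1) * ((T (j+1)).eval x * (T q).eval x)
        + a j * ((T j).eval x * (T q).eval x) := by
    intro j q x
    rw [hrec j x]; ring
  have hxTT : ∀ p q : ℕ, Integrable (fun x => x * (T p).eval x * (T q).eval x) μ := by
    intro p q
    cases p with
    | zero =>
      have he : (fun x => x * (T 0).eval x * (T q).eval x) = fun x =>
          a 0 * ((T 1).eval x * (T q).eval x) + b 0 * ((T 0).eval x * (T q).eval x) :=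
        funext fun x => hxTTfun0 q x
      rw [he]
      have i1 : Integrable (fun x => a 0 * ((T 1).eval x * (T q).eval x)) μ :=
        (hTT 1 q).const_mul _
      have i2 : Integrable (fun x => b 0 * ((T 0).eval x * (T q).eval x)) μ :=
        (hTT 0 q).const_mul _
      exact i1.add i2
    | succ j =>
      have he : (fun x => x * (T (j+1)).eval x * (T q).eval x) = fun x =>
          a (j+1) * ((T (j+2)).eval x * (T q).eval x)
            + b (j+1) * ((T (j+1)).eval x * (T q).eval x)
            + a j * ((T j).eval x * (T q).eval x) :=
        funext fun x => hxTTfunS j q x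
      rw [he]
      have i1 : Integrable (fun x => a (j+1) * ((T (j+2)).eval x * (T q).eval x)) μ :=
        (hTT (j+2) q).const_mul _
      have i2 : Integrable (fun x => b (j+1) * ((T (j+1)).eval x * (T q).eval x)) μ :=
        (hTT (j+1) q).const_mul _
      have i3 : Integrable (fun x => a j * ((T j).eval x * (T q).eval x)) μ :=
        (hTT j q).const_mul _
      exact (i1.add i2).add i3
  -- the integral of x * T_p * T_q
  have hixTT : ∀ p q : ℕ, (∫ x, x * (T p).eval x * (T q).eval x ∂μ) =
      (if p = q then b p else if p + 1 = q then a p else if q + 1 = p then a q else 0) := by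
    intro p q
    cases p with
    | zero =>
      have he : (fun x => x * (T 0).eval x * (T q).eval x) = fun x =>
          a 0 * ((T 1).eval x * (T q).eval x) + b 0 * ((T 0).eval x * (T q).eval x) :=
        funext fun x => hxTTfun0 q x
      have i1 : Integrable (fun x => a 0 * ((T 1).eval x * (T q).eval x)) μ :=
        (hTT 1 q).const_mul _
      have i2 : Integrable (fun x => b 0 * ((T 0).eval x * (T q).eval x)) μ :=
        (hTT 0 q).const_mul _
      rw [he, integral_add i1 i2, integral_const_mul, integral_const_mul, horth 1 q, horth 0 q]
      rcases q with _ | _ | q <;> simp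
    | succ j =>
      have he : (fun x => x * (T (j+1)).eval x * (T q).eval x) = fun x =>
          (a (j+1) * ((T (j+2)).eval x * (T q).eval x)
            + b (j+1) * ((T (j+1)).eval x * (T q).eval x))
            + a j * ((T j).eval x * (T q).eval x) :=
        funext fun x => hxTTfunS j q x
      have i1 : Integrable (fun x => a (j+1) * ((T (j+2)).eval x * (T q).eval x)) μ :=
        (hTT (j+2) q).const_mul _
      have i2 : Integrable (fun x => b (j+1) * ((T (j+1)).eval x * (T q).eval x)) μ :=
        (hTT (j+1) q).const_mul _
      have i12 : Integrable (fun x => a (j+1) * ((T (j+2)).eval x * (T q).eval x)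
          + b (j+1) * ((T (j+1)).eval x * (T q).eval x)) μ := i1.add i2
      have i3 : Integrable (fun x => a j * ((T j).eval x * (T q).eval x)) μ :=
        (hTT j q).const_mul _
      rw [he, integral_add i12 i3, integral_add i1 i2,
        integral_const_mul, integral_const_mul, integral_const_mul,
        horth (j+2) q, horth (j+1) q, horth j q]
      by_cases h1 : q = j + 1
      · subst h1
        simp
      · by_cases h2 : q = j + 2
        · subst h2
          have e1 : ¬ (j + 1 = j + 2) := by omega
          have e2 : ¬ (j + 2 + 1 = j + 1) := by omega
          simp [e1, e2]
        · by_cases h3 : q = j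
          · subst h3
            have e1 : ¬ (q + 2 = q) := by omega
            have e2 : ¬ (q + 1 = q) := by omega
            simp [e1, e2]
          · have e1 : ¬ (j + 2 = q) := by omega
            have e2 : ¬ (j + 1 = q) := by omega
            have e3 : ¬ (j = q) := by omega
            have e4 : ¬ (j + 1 + 1 = q) := by omega
            have e5 : ¬ (q + 1 = j + 1) := by omega
            simp [e1, e2, e3, e4, e5, h3]
  -- the coefficient matrix
  set M : Matrix (Fin (r+1)) (Fin (r+1)) ℝ := (fun i k => (T (k:ℕ)).coeff (i:ℕ)) with hMdef
  have hMtri : M.BlockTriangular id := by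
    intro i k hik
    exact Polynomial.coeff_eq_zero_of_natDegree_lt (by rw [hTnd]; exact hik)
  have hdet : M.det ≠ 0 := by
    rw [Matrix.det_of_upperTriangular hMtri]
    rw [Finset.prod_ne_zero_iff]
    intro i _
    show (T (i:ℕ)).coeff (i:ℕ) ≠ 0
    have : (T (i:ℕ)).coeff (i:ℕ) = (T (i:ℕ)).leadingCoeff := by
      rw [Polynomial.leadingCoeff, hTnd]
    rw [this]
    exact Polynomial.leadingCoeff_ne_zero.mpr (hTne _)
  have hMunit : IsUnit M.det := isUnit_iff_ne_zero.mpr hdet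
  set N : Matrix (Fin (r+1)) (Fin (r+1)) ℝ := M⁻¹ with hNdef
  have hMN : M * N = 1 := Matrix.mul_nonsing_inv M hMunit
  have hNM : N * M = 1 := Matrix.nonsing_inv_mul M hMunit
  -- evaluation expansions
  have evalT : ∀ (k : Fin (r+1)) (x : ℝ),
      (T (k:ℕ)).eval x = ∑ i : Fin (r+1), M i k * x ^ (i:ℕ) := by
    intro k x
    rw [Polynomial.eval_eq_sum_range' (n := r+1) (by rw [hTnd]; exact k.isLt) x]
    rw [← Fin.sum_univ_eq_sum_range (fun i => (T (k:ℕ)).coeff i * x ^ i) (r+1)]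
  have evalPow : ∀ (j : Fin (r+1)) (x : ℝ),
      x ^ (j:ℕ) = ∑ k : Fin (r+1), N k j * (T (k:ℕ)).eval x := by
    intro j x
    have h1 : ∑ k : Fin (r+1), N k j * (T (k:ℕ)).eval x
        = ∑ i : Fin (r+1), (M * N) i j * x ^ (i:ℕ) := by
      calc ∑ k : Fin (r+1), N k j * (T (k:ℕ)).eval x
          = ∑ k : Fin (r+1), ∑ i : Fin (r+1), N k j * (M i k * x ^ (i:ℕ)) := by
            refine Finset.sum_congr rfl fun k _ => ?_
            rw [evalT k x, Finset.mul_sum]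
        _ = ∑ i : Fin (r+1), ∑ k : Fin (r+1), N k j * (M i k * x ^ (i:ℕ)) :=
            Finset.sum_comm
        _ = ∑ i : Fin (r+1), (M * N) i j * x ^ (i:ℕ) := by
            refine Finset.sum_congr rfl fun i _ => ?_
            rw [Matrix.mul_apply, Finset.sum_mul]
            exact Finset.sum_congr rfl fun k _ => by ring
    rw [h1, hMN]
    simp [Matrix.one_apply]
  -- integrability of powers
  have intPP : ∀ i j : Fin (r+1), Integrable (fun x : ℝ => x ^ ((i:ℕ) + (j:ℕ))) μ := by
    intro i j
    have he : (fun x : ℝ => x ^ ((i:ℕ)+(j:ℕ))) = fun x =>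
        ∑ k : Fin (r+1), ∑ l : Fin (r+1),
          (N k i * N l j) * ((T (k:ℕ)).eval x * (T (l:ℕ)).eval x) := by
      funext x
      rw [pow_add, evalPow i x, evalPow j x, Finset.sum_mul_sum]
      exact Finset.sum_congr rfl fun k _ => Finset.sum_congr rfl fun l _ => by ring
    rw [he]
    exact integrable_finset_sum _ fun k _ =>
      integrable_finset_sum _ fun l _ => (hTT _ _).const_mul _
  have intXPP : ∀ i j : Fin (r+1), Integrable (fun x : ℝ => x ^ ((i:ℕ) + (j:ℕ) + 1)) μ := by
    intro i j
    have he : (fun x : ℝ => x ^ ((i:ℕ)+(j:ℕ)+1)) = fun x =>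
        ∑ k : Fin (r+1), ∑ l : Fin (r+1),
          (N k i * N l j) * (x * (T (k:ℕ)).eval x * (T (l:ℕ)).eval x) := by
      funext x
      have h0 : x ^ ((i:ℕ)+(j:ℕ)+1) = x * (x ^ (i:ℕ) * x ^ (j:ℕ)) := by ring
      rw [h0, evalPow i x, evalPow j x, Finset.sum_mul_sum, Finset.mul_sum]
      refine Finset.sum_congr rfl fun k _ => ?_
      rw [Finset.mul_sum]
      exact Finset.sum_congr rfl fun l _ => by ring
    rw [he]
    exact integrable_finset_sum _ fun k _ =>
      integrable_finset_sum _ fun l _ => (hxTT _ _).const_mul _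
  -- the two matrix identities
  have hmom : M.transpose * momentMatrix μ r * M = 1 := by
    ext k l
    have expand : (M.transpose * momentMatrix μ r * M) k l
        = ∑ j' : Fin (r+1), ∑ i : Fin (r+1),
            M i k * (∫ x, x ^ ((i:ℕ)+(j':ℕ)) ∂μ) * M j' l := by
      rw [Matrix.mul_apply]
      refine Finset.sum_congr rfl fun j' _ => ?_
      rw [Matrix.mul_apply, Finset.sum_mul]
      refine Finset.sum_congr rfl fun i _ => ?_
      rw [Matrix.transpose_apply]
      rfl
    rw [expand]
    have step2 : ∀ j' i : Fin (r+1),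
        M i k * (∫ x, x ^ ((i:ℕ)+(j':ℕ)) ∂μ) * M j' l
          = ∫ x, M i k * x ^ ((i:ℕ)+(j':ℕ)) * M j' l ∂μ := by
      intro j' i
      rw [← integral_const_mul, ← integral_mul_const]
    have step3 : ∑ j' : Fin (r+1), ∑ i : Fin (r+1),
        M i k * (∫ x, x ^ ((i:ℕ)+(j':ℕ)) ∂μ) * M j' l
        = ∫ x, ∑ j' : Fin (r+1), ∑ i : Fin (r+1),
            M i k * x ^ ((i:ℕ)+(j':ℕ)) * M j' l ∂μ := by
      calc ∑ j' : Fin (r+1), ∑ i : Fin (r+1),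
            M i k * (∫ x, x ^ ((i:ℕ)+(j':ℕ)) ∂μ) * M j' l
          = ∑ j' : Fin (r+1), ∫ x, ∑ i : Fin (r+1),
              M i k * x ^ ((i:ℕ)+(j':ℕ)) * M j' l ∂μ := by
            refine Finset.sum_congr rfl fun j' _ => ?_
            rw [Finset.sum_congr rfl fun i _ => step2 j' i]
            exact (integral_finset_sum _ fun i _ =>
              ((intPP i j').const_mul _).mul_const _).symm
        _ = ∫ x, ∑ j' : Fin (r+1), ∑ i : Fin (r+1),
              M i k * x ^ ((i:ℕ)+(j':ℕ)) * M j' l ∂μ :=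
            (integral_finset_sum _ fun j' _ =>
              integrable_finset_sum _ fun i _ =>
                ((intPP i j').const_mul _).mul_const _).symm
    rw [step3]
    have hpt : ∀ x : ℝ, ∑ j' : Fin (r+1), ∑ i : Fin (r+1),
        M i k * x ^ ((i:ℕ)+(j':ℕ)) * M j' l
          = (T (k:ℕ)).eval x * (T (l:ℕ)).eval x := by
      intro x
      rw [Finset.sum_comm]
      have h2 : (T (k:ℕ)).eval x * (T (l:ℕ)).eval x
          = ∑ i : Fin (r+1), ∑ j' : Fin (r+1),
              (M i k * x ^ (i:ℕ)) * (M j' l * x ^ (j':ℕ)) := by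
        rw [evalT k x, evalT l x, Finset.sum_mul_sum]
      rw [h2]
      exact Finset.sum_congr rfl fun i _ => Finset.sum_congr rfl fun j' _ => by ring
    rw [integral_congr_ae (Filter.Eventually.of_forall hpt), horth (k:ℕ) (l:ℕ)]
    rw [Matrix.one_apply]
    simp [Fin.val_inj]
  have hloc : M.transpose * locMatrix μ r * M = jacobiMatrix a b r := by
    ext k l
    have expand : (M.transpose * locMatrix μ r * M) k l
        = ∑ j' : Fin (r+1), ∑ i : Fin (r+1),
            M i k * (∫ x, x ^ ((i:ℕ)+(j':ℕ)+1) ∂μ) * M j' l := by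
      rw [Matrix.mul_apply]
      refine Finset.sum_congr rfl fun j' _ => ?_
      rw [Matrix.mul_apply, Finset.sum_mul]
      refine Finset.sum_congr rfl fun i _ => ?_
      rw [Matrix.transpose_apply]
      rfl
    rw [expand]
    have step2 : ∀ j' i : Fin (r+1),
        M i k * (∫ x, x ^ ((i:ℕ)+(j':ℕ)+1) ∂μ) * M j' l
          = ∫ x, M i k * x ^ ((i:ℕ)+(j':ℕ)+1) * M j' l ∂μ := by
      intro j' i
      rw [← integral_const_mul, ← integral_mul_const]
    have step3 : ∑ j' : Fin (r+1), ∑ i : Fin (r+1),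
        M i k * (∫ x, x ^ ((i:ℕ)+(j':ℕ)+1) ∂μ) * M j' l
        = ∫ x, ∑ j' : Fin (r+1), ∑ i : Fin (r+1),
            M i k * x ^ ((i:ℕ)+(j':ℕ)+1) * M j' l ∂μ := by
      calc ∑ j' : Fin (r+1), ∑ i : Fin (r+1),
            M i k * (∫ x, x ^ ((i:ℕ)+(j':ℕ)+1) ∂μ) * M j' l
          = ∑ j' : Fin (r+1), ∫ x, ∑ i : Fin (r+1),
              M i k * x ^ ((i:ℕ)+(j':ℕ)+1) * M j' l ∂μ := by
            refine Finset.sum_congr rfl fun j' _ => ?_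
            rw [Finset.sum_congr rfl fun i _ => step2 j' i]
            exact (integral_finset_sum _ fun i _ =>
              ((intXPP i j').const_mul _).mul_const _).symm
        _ = ∫ x, ∑ j' : Fin (r+1), ∑ i : Fin (r+1),
              M i k * x ^ ((i:ℕ)+(j':ℕ)+1) * M j' l ∂μ :=
            (integral_finset_sum _ fun j' _ =>
              integrable_finset_sum _ fun i _ =>
                ((intXPP i j').const_mul _).mul_const _).symm
    rw [step3]
    have hpt : ∀ x : ℝ, ∑ j' : Fin (r+1), ∑ i : Fin (r+1),
        M i k * x ^ ((i:ℕ)+(j':ℕ)+1) * M j' l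
          = x * (T (k:ℕ)).eval x * (T (l:ℕ)).eval x := by
      intro x
      rw [Finset.sum_comm]
      have h2 : x * (T (k:ℕ)).eval x * (T (l:ℕ)).eval x
          = ∑ i : Fin (r+1), ∑ j' : Fin (r+1),
              x * ((M i k * x ^ (i:ℕ)) * (M j' l * x ^ (j':ℕ))) := by
        rw [evalT k x, evalT l x, mul_assoc, Finset.sum_mul_sum, Finset.mul_sum]
        exact Finset.sum_congr rfl fun i _ => by rw [Finset.mul_sum]
      rw [h2]
      exact Finset.sum_congr rfl fun i _ => Finset.sum_congr rfl fun j' _ => by ring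
    rw [integral_congr_ae (Filter.Eventually.of_forall hpt), hixTT (k:ℕ) (l:ℕ)]
    rfl
  -- the Jacobi matrix is symmetric
  have hJh : (jacobiMatrix a b r).IsHermitian := by
    refine Matrix.IsHermitian.ext fun i j => ?_
    rw [star_trivial]
    show jacobiMatrix a b r j i = jacobiMatrix a b r i j
    unfold jacobiMatrix
    split_ifs <;> first | rfl | (exfalso; omega) | (congr 1 <;> omega)
  exact JacobiAux.key (momentMatrix μ r) (locMatrix μ r) (jacobiMatrix a b r) N M hJh
    hMN hNM hmom hloc
end

section
/- For every r ∈ ℕ and every t ∈ ℝ, t is an eigenvalue of the truncated Jacobi matrix J_r if and only if T_{r+1}(t) = 0. In particular, the smallest eigenvalue of J_r is the smallest real root of the orthonormal polynomial T_{r+1}, and the largest eigenvalue of J_r is its largest real root. -/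
open MeasureTheory Filter

/-- Row expansion of the Jacobi matrix acting on a vector. -/
lemma jacobi_mulVec_row (a b : ℕ → ℝ) (r : ℕ) (v : Fin (r+1) → ℝ) (n : ℕ) (hn : n < r + 1) :
    (jacobiMatrix a b r).mulVec v ⟨n, hn⟩ =
      (if h : 0 < n then a (n-1) * v ⟨n-1, by omega⟩ else 0) + b n * v ⟨n, hn⟩ +
      (if h : n < r then a n * v ⟨n+1, by omega⟩ else 0) := by
  have key : ∀ j : Fin (r+1), jacobiMatrix a b r ⟨n,hn⟩ j * v j =
      (if j = (⟨n,hn⟩ : Fin (r+1)) then b n * v j else 0)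
      + (if h : n < r then (if j = (⟨n+1, by omega⟩ : Fin (r+1)) then a n * v j else 0) else 0)
      + (if h : 0 < n then (if j = (⟨n-1, by omega⟩ : Fin (r+1)) then a (n-1) * v j else 0) else 0) := by
    intro j
    have hj := j.isLt
    simp only [jacobiMatrix, Fin.ext_iff, Fin.val_mk]
    split_ifs
    any_goals ring
    any_goals (exfalso; omega)
    any_goals (rw [show ((j:ℕ)) = n - 1 from by omega]; ring)
  show ∑ j, jacobiMatrix a b r ⟨n,hn⟩ j * v j = _
  rw [Finset.sum_congr rfl (fun j _ => key j)]
  by_cases h1 : n < r <;> by_cases h2 : 0 < n <;>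
    simp [h1, h2, Finset.sum_add_distrib, Finset.sum_ite_eq'] <;> ring

/-- t is an eigenvalue of J_r iff T_{r+1}(t) = 0; in particular the smallest (resp. largest)
eigenvalue of J_r is the smallest (resp. largest) real root of T_{r+1}. -/
theorem jacobi_eigenvalues_roots
    (μ : MeasureTheory.Measure ℝ) [MeasureTheory.IsFiniteMeasure μ]
    (hμc : IsCompact (measSupp μ)) (hμinf : (measSupp μ).Infinite)
    (T : ℕ → Polynomial ℝ) (a b : ℕ → ℝ)
    (hdeg : ∀ j : ℕ, (T j).degree = (j : ℕ))
    (horth : ∀ i j : ℕ,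
      (∫ x : ℝ, (T i).eval x * (T j).eval x ∂μ) = if i = j then 1 else 0)
    (hapos : ∀ j : ℕ, 0 < a j)
    (hrec0 : ∀ x : ℝ, x * (T 0).eval x = a 0 * (T 1).eval x + b 0 * (T 0).eval x)
    (hrec : ∀ (j : ℕ) (x : ℝ), x * (T (j + 1)).eval x =
      a (j + 1) * (T (j + 2)).eval x + b (j + 1) * (T (j + 1)).eval x + a j * (T j).eval x)
    (r : ℕ) :
    (∀ t : ℝ, t ∈ matEigs (jacobiMatrix a b r) ↔ (T (r + 1)).eval t = 0) ∧
      matMinEig (jacobiMatrix a b r) = sInf {t : ℝ | (T (r + 1)).eval t = 0} ∧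
        matMaxEig (jacobiMatrix a b r) = sSup {t : ℝ | (T (r + 1)).eval t = 0} := by
  -- T 0 is a nonzero constant
  have hT0ne : T 0 ≠ 0 := by
    intro h
    have := hdeg 0
    rw [h] at this
    simp at this
  have hT0 : ∀ t : ℝ, (T 0).eval t ≠ 0 := by
    intro t
    have hle : (T 0).degree ≤ 0 := le_of_eq (by simpa using hdeg 0)
    have hC : T 0 = Polynomial.C ((T 0).coeff 0) := Polynomial.eq_C_of_degree_le_zero hle
    rw [hC, Polynomial.eval_C]
    intro h0
    rw [h0, map_zero] at hC
    exact hT0ne hC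
  -- unified recurrence
  have hR : ∀ (n : ℕ) (t : ℝ), t * (T n).eval t =
      (if 0 < n then a (n-1) * (T (n-1)).eval t else 0) + b n * (T n).eval t
        + a n * (T (n+1)).eval t := by
    intro n t
    cases n with
    | zero => have := hrec0 t; simp only [if_neg (lt_irrefl 0)]; linarith
    | succ m =>
        have := hrec m t
        simp only [if_pos (Nat.succ_pos m), Nat.succ_sub_one]
        linarith
  have main : ∀ t : ℝ, t ∈ matEigs (jacobiMatrix a b r) ↔ (T (r + 1)).eval t = 0 := by
    intro t
    constructor
    · rintro ⟨v, hv, hev⟩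
      set w : ℕ → ℝ := fun n => if h : n < r + 1 then v ⟨n, h⟩ else 0 with hw
      have hwv : ∀ (n : ℕ) (h : n < r + 1), w n = v ⟨n, h⟩ := by
        intro n h; simp only [hw]; rw [dif_pos h]
      have hrow : ∀ (n : ℕ), n < r + 1 → t * w n =
          (if 0 < n then a (n-1) * w (n-1) else 0) + b n * w n + a n * w (n+1) := by
        intro n hn
        have h2 : (jacobiMatrix a b r).mulVec v ⟨n, hn⟩ = t * v ⟨n, hn⟩ := by
          rw [hev]; simp
        rw [jacobi_mulVec_row a b r v n hn] at h2
        rw [hwv n hn, ← h2]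
        by_cases h0 : 0 < n <;> by_cases hnr : n < r
        · rw [dif_pos h0, dif_pos hnr, if_pos h0, hwv (n-1) (by omega), hwv (n+1) (by omega)]
        · rw [dif_pos h0, dif_neg hnr, if_pos h0, hwv (n-1) (by omega)]
          have hz : w (n+1) = 0 := by simp only [hw]; rw [dif_neg (by omega)]
          rw [hz, mul_zero]
        · rw [dif_neg h0, dif_pos hnr, if_neg h0, hwv (n+1) (by omega)]
        · rw [dif_neg h0, dif_neg hnr, if_neg h0]
          have hz : w (n+1) = 0 := by simp only [hw]; rw [dif_neg (by omega)]
          rw [hz, mul_zero]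
      -- key identity by induction
      have hD : ∀ n : ℕ, n ≤ r + 1 → (T 0).eval t * w n = w 0 * (T n).eval t := by
        intro n
        induction n using Nat.strong_induction_on with
        | _ n ih =>
          intro hn
          match n with
          | 0 => ring
          | Nat.succ m =>
            have hm : m < r + 1 := by omega
            have e1 := hrow m hm
            have e2 := hR m t
            have hDm : (T 0).eval t * w m = w 0 * (T m).eval t := ih m (by omega) (by omega)
            have key : a m * ((T 0).eval t * w (m+1)) = a m * (w 0 * (T (m+1)).eval t) := by
              rcases Nat.eq_zero_or_pos m with rfl | hm0
              · simp only [if_neg (lt_irrefl 0)] at e1 e2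
                linear_combination w 0 * e2 - (T 0).eval t * e1
              · obtain ⟨k, rfl⟩ : ∃ k, m = k + 1 := ⟨m - 1, by omega⟩
                have hDk : (T 0).eval t * w k = w 0 * (T k).eval t :=
                  ih k (by omega) (by omega)
                simp only [if_pos (Nat.succ_pos k), Nat.succ_sub_one] at e1 e2
                linear_combination w 0 * e2 - (T 0).eval t * e1
                  + (t - b (k+1)) * hDm - a k * hDk
            exact mul_left_cancel₀ (hapos m).ne' key
      have hw0ne : w 0 ≠ 0 := by
        intro h0
        apply hv
        funext i
        have := hD i (by omega)
        rw [h0, zero_mul] at this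
        have hwi : w (i : ℕ) = v i := by
          rw [hwv (i : ℕ) i.isLt]
        have : (T 0).eval t * w (i : ℕ) = 0 := by
          have hle : (i : ℕ) ≤ r + 1 := by omega
          have := hD (i : ℕ) hle
          rw [h0, zero_mul] at this
          exact this
        have := mul_eq_zero.mp this
        rcases this with h | h
        · exact absurd h (hT0 t)
        · rw [← hwi, h]; rfl
      have hfin := hD (r+1) le_rfl
      have : w (r+1) = 0 := by simp [hw]
      rw [this, mul_zero] at hfin
      exact (mul_eq_zero.mp hfin.symm).resolve_left hw0ne
    · intro hroot
      refine ⟨fun i => (T (i : ℕ)).eval t, ?_, ?_⟩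
      · intro h
        have := congrFun h ⟨0, by omega⟩
        exact hT0 t this
      · funext i
        obtain ⟨n, hn⟩ := i
        rw [jacobi_mulVec_row a b r _ n hn]
        simp only [Pi.smul_apply, smul_eq_mul]
        rw [hR n t]
        by_cases h0 : 0 < n <;> by_cases hnr : n < r
        · rw [dif_pos h0, if_pos h0, dif_pos hnr]
        · have hnr' : n = r := by omega
          subst hnr'
          rw [dif_pos h0, if_pos h0, dif_neg hnr, hroot, mul_zero]
        · rw [dif_neg h0, if_neg h0, dif_pos hnr]
        · have hnr' : n = r := by omega
          subst hnr'
          rw [dif_neg h0, if_neg h0, dif_neg hnr, hroot, mul_zero]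
  refine ⟨main, ?_, ?_⟩
  · have : matEigs (jacobiMatrix a b r) = {t : ℝ | (T (r + 1)).eval t = 0} :=
      Set.ext main
    rw [matMinEig, this]
  · have : matEigs (jacobiMatrix a b r) = {t : ℝ | (T (r + 1)).eval t = 0} :=
      Set.ext main
    rw [matMaxEig, this]
end

section
/- Let μ be a nonzero finite Borel measure on ℝ with compact support. Then the sequence (τℓ_r(μ))_{r∈ℕ} is monotone non-increasing with lim_{r→∞} τℓ_r(μ) = min{x : x ∈ supp(μ)}, and the sequence (τu_r(μ))_{r∈ℕ} is monotone non-decreasing with lim_{r→∞} τu_r(μ) = max{x : x ∈ supp(μ)}. -/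
open MeasureTheory Filter

namespace TauAux

open MeasureTheory Matrix Set Polynomial Filter

set_option linter.unusedSectionVars false

variable (μ : Measure ℝ) [IsFiniteMeasure μ]

lemma compl_null : μ (measSupp μ)ᶜ = 0 := by
  obtain ⟨T, hTc, hTS, hT⟩ := TopologicalSpace.isOpen_sUnion_countable
    {U : Set ℝ | IsOpen U ∧ μ U = 0} (fun s hs => hs.1)
  have h1 : (measSupp μ)ᶜ ⊆ ⋃₀ {U : Set ℝ | IsOpen U ∧ μ U = 0} := by
    intro x hx
    simp only [measSupp, Set.mem_compl_iff, Set.mem_setOf_eq] at hx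
    push_neg at hx
    obtain ⟨U, h1, h2, h3⟩ := hx
    exact ⟨U, ⟨h1, h3⟩, h2⟩
  have h2 : μ (⋃₀ {U : Set ℝ | IsOpen U ∧ μ U = 0}) = 0 := by
    rw [← hT]
    exact (measure_sUnion_null_iff hTc).2 (fun s hs => (hTS hs).2)
  exact measure_mono_null h1 h2

lemma ae_supp : ∀ᵐ x ∂μ, x ∈ measSupp μ := by
  rw [MeasureTheory.ae_iff]
  exact compl_null μ

lemma supp_nonempty (hμ : μ ≠ 0) : (measSupp μ).Nonempty := by
  by_contra h
  rw [Set.not_nonempty_iff_eq_empty] at h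
  have h2 := compl_null μ
  rw [h, Set.compl_empty] at h2
  exact hμ (Measure.measure_univ_eq_zero.1 h2)

lemma integrable_cont (hc : IsCompact (measSupp μ)) {f : ℝ → ℝ} (hf : Continuous f) :
    Integrable f μ := by
  obtain ⟨C, hC⟩ := hc.exists_bound_of_continuousOn hf.continuousOn
  refine Integrable.mono' (integrable_const C) hf.aestronglyMeasurable ?_
  filter_upwards [ae_supp μ] with x hx using hC x hx

lemma univ_toReal_pos (hμ : μ ≠ 0) : 0 < (μ Set.univ).toReal :=
  ENNReal.toReal_pos (Measure.measure_univ_pos.2 hμ).ne' (measure_ne_top μ _)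

/-! ### Quadratic form identities -/

lemma entry_lower (hc : IsCompact (measSupp μ)) (r : ℕ) (a : ℝ) (i j : Fin (r+1)) :
    (locMatrix μ r - a • momentMatrix μ r) i j
      = ∫ x, x ^ ((i : ℕ) + (j : ℕ)) * (x - a) ∂μ := by
  have h : ∀ x : ℝ, x ^ ((i:ℕ)+(j:ℕ)) * (x - a)
      = x ^ ((i:ℕ)+(j:ℕ)+1) - a * x ^ ((i:ℕ)+(j:ℕ)) := by intro x; ring
  simp only [h]
  rw [integral_sub (integrable_cont μ hc (continuous_pow _))
      (((integrable_cont μ hc (continuous_pow _))).const_mul a), integral_const_mul]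
  simp [locMatrix, momentMatrix, Matrix.sub_apply, Matrix.smul_apply, smul_eq_mul]

lemma entry_upper (hc : IsCompact (measSupp μ)) (r : ℕ) (a : ℝ) (i j : Fin (r+1)) :
    (a • momentMatrix μ r - locMatrix μ r) i j
      = ∫ x, x ^ ((i : ℕ) + (j : ℕ)) * (a - x) ∂μ := by
  have h : ∀ x : ℝ, x ^ ((i:ℕ)+(j:ℕ)) * (a - x)
      = a * x ^ ((i:ℕ)+(j:ℕ)) - x ^ ((i:ℕ)+(j:ℕ)+1) := by intro x; ring
  simp only [h]
  rw [integral_sub (((integrable_cont μ hc (continuous_pow _))).const_mul a)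
      (integrable_cont μ hc (continuous_pow _)), integral_const_mul]
  simp [locMatrix, momentMatrix, Matrix.sub_apply, Matrix.smul_apply, smul_eq_mul]

lemma key_quad (hc : IsCompact (measSupp μ)) (r : ℕ) {g : ℝ → ℝ} (hg : Continuous g)
    (A : Matrix (Fin (r+1)) (Fin (r+1)) ℝ)
    (hA : ∀ i j, A i j = ∫ x, x ^ ((i : ℕ) + (j : ℕ)) * g x ∂μ)
    (v : Fin (r+1) → ℝ) :
    v ⬝ᵥ (A.mulVec v) = ∫ x, (∑ i : Fin (r+1), v i * x ^ (i : ℕ))^2 * g x ∂μ := by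
  have hint : ∀ (i j : Fin (r+1)), Integrable
      (fun x : ℝ => v i * v j * (x ^ ((i:ℕ)+(j:ℕ)) * g x)) μ :=
    fun i j => (integrable_cont μ hc (((continuous_pow _)).mul hg)).const_mul _
  have hexp : ∀ x : ℝ, (∑ i : Fin (r+1), v i * x ^ (i:ℕ))^2 * g x
      = ∑ i : Fin (r+1), ∑ j : Fin (r+1), v i * v j * (x ^ ((i:ℕ)+(j:ℕ)) * g x) := by
    intro x
    rw [sq, Finset.sum_mul_sum, Finset.sum_mul]
    refine Finset.sum_congr rfl fun i _ => ?_
    rw [Finset.sum_mul]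
    refine Finset.sum_congr rfl fun j _ => ?_
    rw [pow_add]; ring
  simp only [hexp]
  rw [integral_finset_sum _ (fun i _ => integrable_finset_sum _ (fun j _ => hint i j))]
  simp only [integral_finset_sum _ (fun j _ => hint _ j), integral_const_mul]
  simp only [dotProduct, mulVec, hA]
  refine Finset.sum_congr rfl fun i _ => ?_
  rw [Finset.mul_sum]
  exact Finset.sum_congr rfl fun j _ => by ring

lemma herm_mom (r : ℕ) : (momentMatrix μ r).IsHermitian := by
  ext i j
  simp only [conjTranspose_apply, momentMatrix, star_trivial]
  rw [Nat.add_comm (j:ℕ) (i:ℕ)]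

lemma herm_loc (r : ℕ) : (locMatrix μ r).IsHermitian := by
  ext i j
  simp only [conjTranspose_apply, locMatrix, star_trivial]
  rw [Nat.add_comm (j:ℕ) (i:ℕ)]

lemma herm_smul_mom (r : ℕ) (a : ℝ) : (a • momentMatrix μ r).IsHermitian := by
  show (a • momentMatrix μ r)ᴴ = a • momentMatrix μ r
  rw [conjTranspose_smul, star_trivial, (herm_mom μ r).eq]

lemma psd_lower_iff (hc : IsCompact (measSupp μ)) (r : ℕ) (a : ℝ) :
    (locMatrix μ r - a • momentMatrix μ r).PosSemidef
      ↔ ∀ p : ℝ[X], p.natDegree ≤ r → 0 ≤ ∫ x, (p.eval x)^2 * (x - a) ∂μ := by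
  have hkey := key_quad μ hc r (g := fun x => x - a) (by continuity)
    (locMatrix μ r - a • momentMatrix μ r) (entry_lower μ hc r a)
  constructor
  · intro h p hp
    have h2 := h.dotProduct_mulVec_nonneg (fun i : Fin (r+1) => p.coeff i)
    rw [star_trivial, hkey] at h2
    have he : ∀ x : ℝ, p.eval x = ∑ i : Fin (r+1), p.coeff i * x ^ (i:ℕ) := by
      intro x
      rw [Polynomial.eval_eq_sum_range' (Nat.lt_succ_of_le hp),
        ← Fin.sum_univ_eq_sum_range (fun i => p.coeff i * x ^ i)]
    simpa only [← he] using h2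
  · intro h
    refine .of_dotProduct_mulVec_nonneg ((herm_loc μ r).sub (herm_smul_mom μ r a)) fun v => ?_
    rw [star_trivial, hkey]
    set p : ℝ[X] := ∑ i : Fin (r+1), Polynomial.C (v i) * Polynomial.X ^ (i:ℕ) with hp
    have hdeg : p.natDegree ≤ r := by
      refine Polynomial.natDegree_sum_le_of_forall_le _ _ fun i _ => ?_
      exact (Polynomial.natDegree_C_mul_X_pow_le (v i) (i:ℕ)).trans (Nat.lt_succ_iff.1 i.2)
    have he : ∀ x : ℝ, p.eval x = ∑ i : Fin (r+1), v i * x ^ (i:ℕ) := by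
      intro x; simp [hp, Polynomial.eval_finset_sum]
    simpa only [he] using h p hdeg

lemma psd_upper_iff (hc : IsCompact (measSupp μ)) (r : ℕ) (a : ℝ) :
    (a • momentMatrix μ r - locMatrix μ r).PosSemidef
      ↔ ∀ p : ℝ[X], p.natDegree ≤ r → 0 ≤ ∫ x, (p.eval x)^2 * (a - x) ∂μ := by
  have hkey := key_quad μ hc r (g := fun x => a - x) (by continuity)
    (a • momentMatrix μ r - locMatrix μ r) (entry_upper μ hc r a)
  constructor
  · intro h p hp
    have h2 := h.dotProduct_mulVec_nonneg (fun i : Fin (r+1) => p.coeff i)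
    rw [star_trivial, hkey] at h2
    have he : ∀ x : ℝ, p.eval x = ∑ i : Fin (r+1), p.coeff i * x ^ (i:ℕ) := by
      intro x
      rw [Polynomial.eval_eq_sum_range' (Nat.lt_succ_of_le hp),
        ← Fin.sum_univ_eq_sum_range (fun i => p.coeff i * x ^ i)]
    simpa only [← he] using h2
  · intro h
    refine .of_dotProduct_mulVec_nonneg ((herm_smul_mom μ r a).sub (herm_loc μ r)) fun v => ?_
    rw [star_trivial, hkey]
    set p : ℝ[X] := ∑ i : Fin (r+1), Polynomial.C (v i) * Polynomial.X ^ (i:ℕ) with hp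
    have hdeg : p.natDegree ≤ r := by
      refine Polynomial.natDegree_sum_le_of_forall_le _ _ fun i _ => ?_
      exact (Polynomial.natDegree_C_mul_X_pow_le (v i) (i:ℕ)).trans (Nat.lt_succ_iff.1 i.2)
    have he : ∀ x : ℝ, p.eval x = ∑ i : Fin (r+1), v i * x ^ (i:ℕ) := by
      intro x; simp [hp, Polynomial.eval_finset_sum]
    simpa only [he] using h p hdeg

/-! ### Set-level properties -/

/-- The set whose sup is `tauL`. -/
def Tl (r : ℕ) : Set ℝ := {a : ℝ | (locMatrix μ r - a • momentMatrix μ r).PosSemidef}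

/-- The set whose inf is `tauU`. -/
def Tu (r : ℕ) : Set ℝ := {a : ℝ | (a • momentMatrix μ r - locMatrix μ r).PosSemidef}

lemma tauL_eq (r : ℕ) : tauL μ r = sSup (Tl μ r) := rfl
lemma tauU_eq (r : ℕ) : tauU μ r = sInf (Tu μ r) := rfl

variable (hμ : μ ≠ 0) (hc : IsCompact (measSupp μ))
include hμ hc

lemma sInf_mem_Tl (r : ℕ) : sInf (measSupp μ) ∈ Tl μ r := by
  rw [Tl, Set.mem_setOf_eq, psd_lower_iff μ hc]
  intro p hp
  refine integral_nonneg_of_ae ?_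
  filter_upwards [ae_supp μ] with x hx
  exact mul_nonneg (sq_nonneg _) (sub_nonneg.2 (csInf_le hc.bddBelow hx))

lemma sSup_mem_Tu (r : ℕ) : sSup (measSupp μ) ∈ Tu μ r := by
  rw [Tu, Set.mem_setOf_eq, psd_upper_iff μ hc]
  intro p hp
  refine integral_nonneg_of_ae ?_
  filter_upwards [ae_supp μ] with x hx
  exact mul_nonneg (sq_nonneg _) (sub_nonneg.2 (le_csSup hc.bddAbove hx))

lemma Tl_subset_Iic (r : ℕ) : Tl μ r ⊆ Set.Iic (sSup (measSupp μ)) := by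
  intro a ha
  have h1 := (psd_lower_iff μ hc r a).1 ha 1 (by simp)
  simp only [Polynomial.eval_one, one_pow, one_mul] at h1
  have hint : Integrable (fun x : ℝ => x) μ := integrable_cont μ hc continuous_id
  rw [integral_sub hint (integrable_const a), integral_const, smul_eq_mul, measureReal_def] at h1
  have h2 : ∫ x, x ∂μ ≤ (μ Set.univ).toReal * sSup (measSupp μ) := by
    calc ∫ x, x ∂μ ≤ ∫ _x, sSup (measSupp μ) ∂μ := by
          refine integral_mono_ae hint (integrable_const _) ?_
          filter_upwards [ae_supp μ] with x hx using le_csSup hc.bddAbove hx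
      _ = (μ Set.univ).toReal * sSup (measSupp μ) := by rw [integral_const, smul_eq_mul, measureReal_def]
  have hpos := univ_toReal_pos μ hμ
  rw [Set.mem_Iic]
  nlinarith
lemma Tu_subset_Ici (r : ℕ) : Tu μ r ⊆ Set.Ici (sInf (measSupp μ)) := by
  intro a ha
  have h1 := (psd_upper_iff μ hc r a).1 ha 1 (by simp)
  simp only [Polynomial.eval_one, one_pow, one_mul] at h1
  have hint : Integrable (fun x : ℝ => x) μ := integrable_cont μ hc continuous_id
  rw [integral_sub (integrable_const a) hint, integral_const, smul_eq_mul, measureReal_def] at h1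
  have h2 : (μ Set.univ).toReal * sInf (measSupp μ) ≤ ∫ x, x ∂μ := by
    calc (μ Set.univ).toReal * sInf (measSupp μ)
        = ∫ _x, sInf (measSupp μ) ∂μ := by rw [integral_const, smul_eq_mul, measureReal_def]
      _ ≤ ∫ x, x ∂μ := by
          refine integral_mono_ae (integrable_const _) hint ?_
          filter_upwards [ae_supp μ] with x hx using csInf_le hc.bddBelow hx
  have hpos := univ_toReal_pos μ hμ
  rw [Set.mem_Ici]
  nlinarith

lemma Tl_mono {r s : ℕ} (h : r ≤ s) : Tl μ s ⊆ Tl μ r := by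
  intro a ha
  rw [Tl, Set.mem_setOf_eq, psd_lower_iff μ hc] at ha ⊢
  exact fun p hp => ha p (hp.trans h)

lemma Tu_mono {r s : ℕ} (h : r ≤ s) : Tu μ s ⊆ Tu μ r := by
  intro a ha
  rw [Tu, Set.mem_setOf_eq, psd_upper_iff μ hc] at ha ⊢
  exact fun p hp => ha p (hp.trans h)

lemma Tl_lowerSet (r : ℕ) {a b : ℝ} (hb : b ≤ a) (ha : a ∈ Tl μ r) : b ∈ Tl μ r := by
  rw [Tl, Set.mem_setOf_eq, psd_lower_iff μ hc] at ha ⊢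
  intro p hp
  have h1 := ha p hp
  have hi1 : Integrable (fun x => (p.eval x)^2 * (x - a)) μ :=
    integrable_cont μ hc (((p.continuous_aeval).pow 2).mul (by continuity))
  have hi2 : Integrable (fun x => (p.eval x)^2 * (a - b)) μ :=
    integrable_cont μ hc (((p.continuous_aeval).pow 2).mul continuous_const)
  have h2 : 0 ≤ ∫ x, (p.eval x)^2 * (a - b) ∂μ :=
    integral_nonneg fun x => mul_nonneg (sq_nonneg _) (by linarith)
  calc (0:ℝ) ≤ (∫ x, (p.eval x)^2 * (x - a) ∂μ) + ∫ x, (p.eval x)^2 * (a - b) ∂μ :=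
        add_nonneg h1 h2
    _ = ∫ x, ((p.eval x)^2 * (x - a) + (p.eval x)^2 * (a - b)) ∂μ :=
        (integral_add hi1 hi2).symm
    _ = ∫ x, (p.eval x)^2 * (x - b) ∂μ := by
        congr 1; funext x; ring

lemma Tu_upperSet (r : ℕ) {a b : ℝ} (hb : a ≤ b) (ha : a ∈ Tu μ r) : b ∈ Tu μ r := by
  rw [Tu, Set.mem_setOf_eq, psd_upper_iff μ hc] at ha ⊢
  intro p hp
  have h1 := ha p hp
  have hi1 : Integrable (fun x => (p.eval x)^2 * (a - x)) μ :=
    integrable_cont μ hc (((p.continuous_aeval).pow 2).mul (by continuity))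
  have hi2 : Integrable (fun x => (p.eval x)^2 * (b - a)) μ :=
    integrable_cont μ hc (((p.continuous_aeval).pow 2).mul continuous_const)
  have h2 : 0 ≤ ∫ x, (p.eval x)^2 * (b - a) ∂μ :=
    integral_nonneg fun x => mul_nonneg (sq_nonneg _) (by linarith)
  calc (0:ℝ) ≤ (∫ x, (p.eval x)^2 * (a - x) ∂μ) + ∫ x, (p.eval x)^2 * (b - a) ∂μ :=
        add_nonneg h1 h2
    _ = ∫ x, ((p.eval x)^2 * (a - x) + (p.eval x)^2 * (b - a)) ∂μ :=
        (integral_add hi1 hi2).symm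
    _ = ∫ x, (p.eval x)^2 * (b - x) ∂μ := by
        congr 1; funext x; ring

/-! ### Concentration estimates -/

lemma exists_not_mem_Tl {ε : ℝ} (hε : 0 < ε) (hε1 : ε ≤ 1) :
    ∃ N : ℕ, sInf (measSupp μ) + ε ∉ Tl μ N := by
  set m := sInf (measSupp μ) with hm
  set M := sSup (measSupp μ) with hM
  have hne := supp_nonempty μ hμ
  have hmM : m ≤ M := csInf_le_csSup hne hc.bddBelow hc.bddAbove
  have hsupp : ∀ x ∈ measSupp μ, m ≤ x ∧ x ≤ M :=
    fun x hx => ⟨csInf_le hc.bddBelow hx, le_csSup hc.bddAbove hx⟩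
  set K := M + 2 with hK
  set a := m + ε with ha
  set B₁ := K - (m + ε/4) with hB₁
  set B₂ := K - a with hB₂
  have hB₂1 : 1 ≤ B₂ := by rw [hB₂, hK, ha]; linarith
  have hB₁₂ : B₂ < B₁ := by rw [hB₂, hB₁]; linarith
  have hB₁pos : 0 < B₁ := by linarith
  set q := B₂ / B₁ with hq
  have hq0 : 0 ≤ q := div_nonneg (by linarith) (le_of_lt hB₁pos)
  have hq1 : q < 1 := (div_lt_one hB₁pos).2 hB₁₂
  set U := Set.Iio (m + ε/4) with hU
  have hmU : m ∈ U := by rw [hU]; simp; linarith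
  have hμU : 0 < (μ U).toReal := by
    refine ENNReal.toReal_pos ?_ (measure_ne_top μ U)
    exact (hc.sInf_mem hne) U isOpen_Iio hmU
  have hc2 : 0 < (M - m + 1) * (μ Set.univ).toReal :=
    mul_pos (by linarith) (univ_toReal_pos μ hμ)
  obtain ⟨N, hN⟩ := ((tendsto_pow_atTop_nhds_zero_of_lt_one hq0 hq1).eventually
    (gt_mem_nhds (show (0:ℝ) < (3*ε/4) * (μ U).toReal / ((M - m + 1) * (μ Set.univ).toReal)
      by positivity))).exists
  refine ⟨N, fun hmem => ?_⟩
  rw [Tl, Set.mem_setOf_eq, psd_lower_iff μ hc] at hmem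
  set p : ℝ[X] := (Polynomial.C K - Polynomial.X)^N with hp
  have hdeg : p.natDegree ≤ N := by
    refine Polynomial.natDegree_pow_le.trans ?_
    have h1 : (Polynomial.C K - Polynomial.X : ℝ[X]).natDegree ≤ 1 :=
      (Polynomial.natDegree_sub_le _ _).trans (by simp)
    calc N * (Polynomial.C K - Polynomial.X : ℝ[X]).natDegree ≤ N * 1 :=
          Nat.mul_le_mul_left N h1
      _ = N := Nat.mul_one N
  have hkey := hmem p hdeg
  have heval : (fun x : ℝ => (p.eval x)^2 * (x - a)) = fun x => ((K - x)^N)^2 * (x - a) := by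
    funext x; simp [hp]
  rw [heval] at hkey
  set f : ℝ → ℝ := fun x => ((K - x)^N)^2 * (x - a) with hf
  have hfc : Continuous f := by rw [hf]; continuity
  have hint : Integrable f μ := integrable_cont μ hc hfc
  have hsplit : ∫ x, f x ∂μ = (∫ x in U, f x ∂μ) + ∫ x in Uᶜ, f x ∂μ :=
    (integral_add_compl measurableSet_Iio hint).symm
  have h1 : ∫ x in U, f x ∂μ ≤ (-(3*ε/4) * (B₁^N)^2) * (μ U).toReal := by
    have hmono : ∫ x in U, f x ∂μ ≤ ∫ _x in U, -(3*ε/4) * (B₁^N)^2 ∂μ := by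
      refine integral_mono_ae hint.restrict (integrable_const _) ?_
      filter_upwards [ae_restrict_of_ae (ae_supp μ), ae_restrict_mem measurableSet_Iio]
        with x hx hxU
      have h0 : m ≤ x := (hsupp x hx).1
      have h0' : x < m + ε/4 := hxU
      have hw : B₁ ≤ K - x := by rw [hB₁]; linarith
      have hW : (B₁^N)^2 ≤ ((K - x)^N)^2 :=
        pow_le_pow_left₀ (pow_nonneg (le_of_lt hB₁pos) N)
          (pow_le_pow_left₀ (le_of_lt hB₁pos) hw N) 2
      have hxa : x - a ≤ -(3*ε/4) := by rw [ha]; linarith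
      calc f x = ((K - x)^N)^2 * (x - a) := rfl
        _ ≤ (B₁^N)^2 * (x - a) := mul_le_mul_of_nonpos_right hW (by linarith)
        _ ≤ (B₁^N)^2 * (-(3*ε/4)) := mul_le_mul_of_nonneg_left hxa (by positivity)
        _ = -(3*ε/4) * (B₁^N)^2 := by ring
    rw [setIntegral_const, smul_eq_mul] at hmono
    rw [mul_comm ((-(3*ε/4)) * (B₁^N)^2) ((μ U).toReal)]
    exact hmono
  have h2 : ∫ x in Uᶜ, f x ∂μ ≤ ((B₂^N)^2 * (M - m + 1)) * (μ Set.univ).toReal := by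
    have hRnn : 0 ≤ (B₂^N)^2 * (M - m + 1) := mul_nonneg (sq_nonneg _) (by linarith)
    have hmono : ∫ x in Uᶜ, f x ∂μ ≤ ∫ _x in Uᶜ, (B₂^N)^2 * (M - m + 1) ∂μ := by
      refine integral_mono_ae hint.restrict (integrable_const _) ?_
      filter_upwards [ae_restrict_of_ae (ae_supp μ)] with x hx
      obtain ⟨h0, h0'⟩ := hsupp x hx
      rcases le_or_gt x a with hxa | hxa
      · have : f x ≤ 0 := mul_nonpos_of_nonneg_of_nonpos (sq_nonneg _) (by linarith)
        linarith
      · have hw0 : 0 ≤ K - x := by rw [hK]; linarith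
        have hw : K - x ≤ B₂ := by rw [hB₂]; linarith
        have hW : ((K - x)^N)^2 ≤ (B₂^N)^2 :=
          pow_le_pow_left₀ (pow_nonneg hw0 N) (pow_le_pow_left₀ hw0 hw N) 2
        have hxa2 : x - a ≤ M - m + 1 := by rw [ha]; linarith
        calc f x = ((K - x)^N)^2 * (x - a) := rfl
          _ ≤ (B₂^N)^2 * (M - m + 1) :=
              mul_le_mul hW hxa2 (by linarith) (sq_nonneg _)
    rw [setIntegral_const, smul_eq_mul, measureReal_def] at hmono
    refine hmono.trans ?_
    rw [mul_comm ((μ Uᶜ).toReal)]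
    exact mul_le_mul_of_nonneg_left
      (ENNReal.toReal_mono (measure_ne_top μ _) (measure_mono (Set.subset_univ _))) hRnn
  have hq2 : (B₂^N)^2 = (q^N)^2 * (B₁^N)^2 := by
    have : B₂ = q * B₁ := by rw [hq, div_mul_cancel₀ _ hB₁pos.ne']
    rw [this, mul_pow]; ring
  have hqN1 : q^N ≤ 1 := pow_le_one₀ hq0 (le_of_lt hq1)
  have hqNnn : 0 ≤ q^N := pow_nonneg hq0 N
  have hfinal : ((B₂^N)^2 * (M - m + 1)) * (μ Set.univ).toReal
      < (3*ε/4) * (B₁^N)^2 * (μ U).toReal := by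
    have hb : (0:ℝ) < (B₁^N)^2 := by positivity
    have hN' : q^N * ((M - m + 1) * (μ Set.univ).toReal)
        < (3*ε/4) * (μ U).toReal := (lt_div_iff₀ hc2).1 hN
    have e1 : (q^N)^2 ≤ q^N := by
      calc (q^N)^2 = q^N * q^N := sq (q^N) ▸ rfl
        _ ≤ q^N * 1 := mul_le_mul_of_nonneg_left hqN1 hqNnn
        _ = q^N := mul_one _
    calc ((B₂^N)^2 * (M - m + 1)) * (μ Set.univ).toReal
        = ((q^N)^2 * ((M - m + 1) * (μ Set.univ).toReal)) * (B₁^N)^2 := by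
          rw [hq2]; ring
      _ ≤ (q^N * ((M - m + 1) * (μ Set.univ).toReal)) * (B₁^N)^2 :=
          mul_le_mul_of_nonneg_right
            (mul_le_mul_of_nonneg_right e1 (le_of_lt hc2)) (le_of_lt hb)
      _ < ((3*ε/4) * (μ U).toReal) * (B₁^N)^2 := mul_lt_mul_of_pos_right hN' hb
      _ = (3*ε/4) * (B₁^N)^2 * (μ U).toReal := by ring
  rw [hsplit] at hkey
  linarith
lemma exists_not_mem_Tu {ε : ℝ} (hε : 0 < ε) (hε1 : ε ≤ 1) :
    ∃ N : ℕ, sSup (measSupp μ) - ε ∉ Tu μ N := by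
  set m := sInf (measSupp μ) with hm
  set M := sSup (measSupp μ) with hM
  have hne := supp_nonempty μ hμ
  have hmM : m ≤ M := csInf_le_csSup hne hc.bddBelow hc.bddAbove
  have hsupp : ∀ x ∈ measSupp μ, m ≤ x ∧ x ≤ M :=
    fun x hx => ⟨csInf_le hc.bddBelow hx, le_csSup hc.bddAbove hx⟩
  set K := m - 2 with hK
  set a := M - ε with ha
  set B₁ := (M - ε/4) - K with hB₁
  set B₂ := a - K with hB₂
  have hB₂1 : 1 ≤ B₂ := by rw [hB₂, hK, ha]; linarith
  have hB₁₂ : B₂ < B₁ := by rw [hB₂, hB₁]; linarith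
  have hB₁pos : 0 < B₁ := by linarith
  set q := B₂ / B₁ with hq
  have hq0 : 0 ≤ q := div_nonneg (by linarith) (le_of_lt hB₁pos)
  have hq1 : q < 1 := (div_lt_one hB₁pos).2 hB₁₂
  set U := Set.Ioi (M - ε/4) with hU
  have hmU : M ∈ U := by rw [hU]; simp; linarith
  have hμU : 0 < (μ U).toReal := by
    refine ENNReal.toReal_pos ?_ (measure_ne_top μ U)
    exact (hc.sSup_mem hne) U isOpen_Ioi hmU
  have hc2 : 0 < (M - m + 1) * (μ Set.univ).toReal :=
    mul_pos (by linarith) (univ_toReal_pos μ hμ)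
  obtain ⟨N, hN⟩ := ((tendsto_pow_atTop_nhds_zero_of_lt_one hq0 hq1).eventually
    (gt_mem_nhds (show (0:ℝ) < (3*ε/4) * (μ U).toReal / ((M - m + 1) * (μ Set.univ).toReal)
      by positivity))).exists
  refine ⟨N, fun hmem => ?_⟩
  rw [Tu, Set.mem_setOf_eq, psd_upper_iff μ hc] at hmem
  set p : ℝ[X] := (Polynomial.X - Polynomial.C K)^N with hp
  have hdeg : p.natDegree ≤ N := by
    refine Polynomial.natDegree_pow_le.trans ?_
    have h1 : (Polynomial.X - Polynomial.C K : ℝ[X]).natDegree ≤ 1 :=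
      (Polynomial.natDegree_sub_le _ _).trans (by simp)
    calc N * (Polynomial.X - Polynomial.C K : ℝ[X]).natDegree ≤ N * 1 :=
          Nat.mul_le_mul_left N h1
      _ = N := Nat.mul_one N
  have hkey := hmem p hdeg
  have heval : (fun x : ℝ => (p.eval x)^2 * (a - x)) = fun x => ((x - K)^N)^2 * (a - x) := by
    funext x; simp [hp]
  rw [heval] at hkey
  set f : ℝ → ℝ := fun x => ((x - K)^N)^2 * (a - x) with hf
  have hfc : Continuous f := by rw [hf]; continuity
  have hint : Integrable f μ := integrable_cont μ hc hfc
  have hsplit : ∫ x, f x ∂μ = (∫ x in U, f x ∂μ) + ∫ x in Uᶜ, f x ∂μ :=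
    (integral_add_compl measurableSet_Ioi hint).symm
  have h1 : ∫ x in U, f x ∂μ ≤ (-(3*ε/4) * (B₁^N)^2) * (μ U).toReal := by
    have hmono : ∫ x in U, f x ∂μ ≤ ∫ _x in U, -(3*ε/4) * (B₁^N)^2 ∂μ := by
      refine integral_mono_ae hint.restrict (integrable_const _) ?_
      filter_upwards [ae_restrict_of_ae (ae_supp μ), ae_restrict_mem measurableSet_Ioi]
        with x hx hxU
      have h0 : x ≤ M := (hsupp x hx).2
      have h0' : M - ε/4 < x := hxU
      have hw : B₁ ≤ x - K := by rw [hB₁]; linarith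
      have hW : (B₁^N)^2 ≤ ((x - K)^N)^2 :=
        pow_le_pow_left₀ (pow_nonneg (le_of_lt hB₁pos) N)
          (pow_le_pow_left₀ (le_of_lt hB₁pos) hw N) 2
      have hxa : a - x ≤ -(3*ε/4) := by rw [ha]; linarith
      calc f x = ((x - K)^N)^2 * (a - x) := rfl
        _ ≤ (B₁^N)^2 * (a - x) := mul_le_mul_of_nonpos_right hW (by linarith)
        _ ≤ (B₁^N)^2 * (-(3*ε/4)) := mul_le_mul_of_nonneg_left hxa (by positivity)
        _ = -(3*ε/4) * (B₁^N)^2 := by ring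
    rw [setIntegral_const, smul_eq_mul] at hmono
    rw [mul_comm ((-(3*ε/4)) * (B₁^N)^2) ((μ U).toReal)]
    exact hmono
  have h2 : ∫ x in Uᶜ, f x ∂μ ≤ ((B₂^N)^2 * (M - m + 1)) * (μ Set.univ).toReal := by
    have hRnn : 0 ≤ (B₂^N)^2 * (M - m + 1) := mul_nonneg (sq_nonneg _) (by linarith)
    have hmono : ∫ x in Uᶜ, f x ∂μ ≤ ∫ _x in Uᶜ, (B₂^N)^2 * (M - m + 1) ∂μ := by
      refine integral_mono_ae hint.restrict (integrable_const _) ?_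
      filter_upwards [ae_restrict_of_ae (ae_supp μ)] with x hx
      obtain ⟨h0, h0'⟩ := hsupp x hx
      rcases le_or_gt a x with hxa | hxa
      · have : f x ≤ 0 := mul_nonpos_of_nonneg_of_nonpos (sq_nonneg _) (by linarith)
        linarith
      · have hw0 : 0 ≤ x - K := by rw [hK]; linarith
        have hw : x - K ≤ B₂ := by rw [hB₂]; linarith
        have hW : ((x - K)^N)^2 ≤ (B₂^N)^2 :=
          pow_le_pow_left₀ (pow_nonneg hw0 N) (pow_le_pow_left₀ hw0 hw N) 2
        have hxa2 : a - x ≤ M - m + 1 := by rw [ha]; linarith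
        calc f x = ((x - K)^N)^2 * (a - x) := rfl
          _ ≤ (B₂^N)^2 * (M - m + 1) :=
              mul_le_mul hW hxa2 (by linarith) (sq_nonneg _)
    rw [setIntegral_const, smul_eq_mul, measureReal_def] at hmono
    refine hmono.trans ?_
    rw [mul_comm ((μ Uᶜ).toReal)]
    exact mul_le_mul_of_nonneg_left
      (ENNReal.toReal_mono (measure_ne_top μ _) (measure_mono (Set.subset_univ _))) hRnn
  have hq2 : (B₂^N)^2 = (q^N)^2 * (B₁^N)^2 := by
    have : B₂ = q * B₁ := by rw [hq, div_mul_cancel₀ _ hB₁pos.ne']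
    rw [this, mul_pow]; ring
  have hqN1 : q^N ≤ 1 := pow_le_one₀ hq0 (le_of_lt hq1)
  have hqNnn : 0 ≤ q^N := pow_nonneg hq0 N
  have hfinal : ((B₂^N)^2 * (M - m + 1)) * (μ Set.univ).toReal
      < (3*ε/4) * (B₁^N)^2 * (μ U).toReal := by
    have hb : (0:ℝ) < (B₁^N)^2 := by positivity
    have hN' : q^N * ((M - m + 1) * (μ Set.univ).toReal)
        < (3*ε/4) * (μ U).toReal := (lt_div_iff₀ hc2).1 hN
    have e1 : (q^N)^2 ≤ q^N := by
      calc (q^N)^2 = q^N * q^N := sq (q^N) ▸ rfl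
        _ ≤ q^N * 1 := mul_le_mul_of_nonneg_left hqN1 hqNnn
        _ = q^N := mul_one _
    calc ((B₂^N)^2 * (M - m + 1)) * (μ Set.univ).toReal
        = ((q^N)^2 * ((M - m + 1) * (μ Set.univ).toReal)) * (B₁^N)^2 := by
          rw [hq2]; ring
      _ ≤ (q^N * ((M - m + 1) * (μ Set.univ).toReal)) * (B₁^N)^2 :=
          mul_le_mul_of_nonneg_right
            (mul_le_mul_of_nonneg_right e1 (le_of_lt hc2)) (le_of_lt hb)
      _ < ((3*ε/4) * (μ U).toReal) * (B₁^N)^2 := mul_lt_mul_of_pos_right hN' hb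
      _ = (3*ε/4) * (B₁^N)^2 * (μ U).toReal := by ring
  rw [hsplit] at hkey
  linarith

end TauAux

/-- For a nonzero finite compactly supported measure μ on ℝ, (τℓ_r(μ)) is non-increasing
with limit min supp(μ), and (τu_r(μ)) is non-decreasing with limit max supp(μ). -/
theorem tau_tendsto_support_endpoints
    (μ : MeasureTheory.Measure ℝ) [MeasureTheory.IsFiniteMeasure μ] (hμ : μ ≠ 0)
    (hμc : IsCompact (measSupp μ)) :
    Antitone (fun r : ℕ => tauL μ r) ∧
      Filter.Tendsto (fun r : ℕ => tauL μ r) Filter.atTop (nhds (sInf (measSupp μ))) ∧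
      Monotone (fun r : ℕ => tauU μ r) ∧
      Filter.Tendsto (fun r : ℕ => tauU μ r) Filter.atTop (nhds (sSup (measSupp μ))) := by
  open TauAux in
  have hbddL : ∀ r : ℕ, BddAbove (Tl μ r) :=
    fun r => ⟨sSup (measSupp μ), fun a ha => Tl_subset_Iic μ hμ hμc r ha⟩
  have hneL : ∀ r : ℕ, (Tl μ r).Nonempty := fun r => ⟨_, sInf_mem_Tl μ hμ hμc r⟩
  have hbddU : ∀ r : ℕ, BddBelow (Tu μ r) :=
    fun r => ⟨sInf (measSupp μ), fun a ha => Tu_subset_Ici μ hμ hμc r ha⟩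
  have hneU : ∀ r : ℕ, (Tu μ r).Nonempty := fun r => ⟨_, sSup_mem_Tu μ hμ hμc r⟩
  have hanti : Antitone (fun r : ℕ => tauL μ r) := fun r s hrs =>
    csSup_le_csSup (hbddL r) (hneL s) (Tl_mono μ hμ hμc hrs)
  have hmono : Monotone (fun r : ℕ => tauU μ r) := fun r s hrs =>
    csInf_le_csInf (hbddU r) (hneU s) (Tu_mono μ hμ hμc hrs)
  have hlb : ∀ r : ℕ, sInf (measSupp μ) ≤ tauL μ r :=
    fun r => le_csSup (hbddL r) (sInf_mem_Tl μ hμ hμc r)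
  have hub : ∀ r : ℕ, tauU μ r ≤ sSup (measSupp μ) :=
    fun r => csInf_le (hbddU r) (sSup_mem_Tu μ hμ hμc r)
  refine ⟨hanti, ?_, hmono, ?_⟩
  · refine tendsto_order.2 ⟨fun b hb => Eventually.of_forall
      (fun r => lt_of_lt_of_le hb (hlb r)), fun b hb => ?_⟩
    set m := sInf (measSupp μ) with hm
    set ε := min (b - m) 1 / 2 with hε'
    have hminpos : 0 < min (b - m) 1 := lt_min (by linarith) one_pos
    have hε : 0 < ε := by rw [hε']; linarith
    have hε1 : ε ≤ 1 := by
      have := min_le_right (b - m) 1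
      rw [hε']; linarith
    have hab : m + ε < b := by
      have := min_le_left (b - m) 1
      rw [hε']; linarith
    obtain ⟨N, hN⟩ := exists_not_mem_Tl μ hμ hμc hε hε1
    have hle : tauL μ N ≤ m + ε := by
      refine csSup_le (hneL N) fun x hx => ?_
      by_contra hlt
      push_neg at hlt
      exact hN (Tl_lowerSet μ hμ hμc N (le_of_lt hlt) hx)
    refine eventually_atTop.2 ⟨N, fun r hr => ?_⟩
    exact lt_of_le_of_lt (le_trans (hanti hr) hle) hab
  · refine tendsto_order.2 ⟨fun b hb => ?_, fun b hb => Eventually.of_forall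
      (fun r => lt_of_le_of_lt (hub r) hb)⟩
    set M := sSup (measSupp μ) with hM
    set ε := min (M - b) 1 / 2 with hε'
    have hminpos : 0 < min (M - b) 1 := lt_min (by linarith) one_pos
    have hε : 0 < ε := by rw [hε']; linarith
    have hε1 : ε ≤ 1 := by
      have := min_le_right (M - b) 1
      rw [hε']; linarith
    have hab : b < M - ε := by
      have := min_le_left (M - b) 1
      rw [hε']; linarith
    obtain ⟨N, hN⟩ := exists_not_mem_Tu μ hμ hμc hε hε1
    have hge : M - ε ≤ tauU μ N := by
      refine le_csInf (hneU N) fun x hx => ?_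
      by_contra hlt
      push_neg at hlt
      exact hN (Tu_upperSet μ hμ hμc N (le_of_lt hlt) hx)
    refine eventually_atTop.2 ⟨N, fun r hr => ?_⟩
    exact lt_of_lt_of_le hab (le_trans hge (hmono hr))
end
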